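/- arXiv:2303.00109 — 6 statements merged into one kernel-verified Lean document; each statement's English description precedes it below -/
import Mathlib

section
/- Every finite simple graph of maximum degree at most 3 admits a matching M such that the quotient graph obtained by contracting all edges of M is bipartite (as a multigraph, equivalently: the graph obtained from G by identifying the endpoints of each matching edge contains no odd closed walk). -/
/-!
Choose a 2-colouring `c` of the vertices with the fewest monochromatic edges (a maximum cut).
Recolouring a single vertex `u` exchanges its monochromatic and bichromatic edges and leaves all
other edges alone, so by minimality `u` has at most `deg u / 2 ≤ 1` neighbours of its own colour.
Hence the monochromatic edges form a matching `M`, and `c` properly colours the graph obtained by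
contracting `M`.
-/

open Finset

namespace SimpleGraph

variable {V : Type*}

def monochromatic (G : SimpleGraph V) (c : V → Bool) : SimpleGraph V where
  Adj v w := G.Adj v w ∧ c v = c w
  symm.symm _ _ h := ⟨h.1.symm, h.2.symm⟩
  loopless.irrefl v h := G.loopless.irrefl v h.1

@[simp]
theorem monochromatic_adj {G : SimpleGraph V} {c : V → Bool} {v w : V} :
    (G.monochromatic c).Adj v w ↔ G.Adj v w ∧ c v = c w :=
  Iff.rfl

instance (G : SimpleGraph V) [DecidableRel G.Adj] (c : V → Bool) :
    DecidableRel (G.monochromatic c).Adj :=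
  fun _ _ => decidable_of_iff' _ monochromatic_adj

theorem monochromatic_le (G : SimpleGraph V) (c : V → Bool) : G.monochromatic c ≤ G :=
  fun _ _ h => h.1

theorem eq_of_mem_edgeSet_of_degree_le_one {H : SimpleGraph V} [∀ v, Fintype (H.neighborSet v)]
    (hH : ∀ v, H.degree v ≤ 1) {e f : Sym2 V} (he : e ∈ H.edgeSet) (hf : f ∈ H.edgeSet)
    {v : V} (hve : v ∈ e) (hvf : v ∈ f) : e = f := by
  obtain ⟨x, rfl⟩ := Sym2.mem_iff_exists.mp hve
  obtain ⟨y, rfl⟩ := Sym2.mem_iff_exists.mp hvf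
  have hx : x ∈ H.neighborFinset v := (H.mem_neighborFinset v x).mpr he
  have hy : y ∈ H.neighborFinset v := (H.mem_neighborFinset v y).mpr hf
  rw [card_le_one.mp (hH v) x hx y hy]

variable [DecidableEq V]

theorem deleteIncidenceSet_monochromatic_update (G : SimpleGraph V) (c : V → Bool) (u : V)
    (b : Bool) :
    (G.monochromatic (Function.update c u b)).deleteIncidenceSet u =
      (G.monochromatic c).deleteIncidenceSet u := by
  ext v w
  simp only [deleteIncidenceSet_adj, monochromatic_adj]
  refine and_congr_left fun ⟨hv, hw⟩ => ?_
  rw [Function.update_of_ne hv, Function.update_of_ne hw]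

variable [Fintype V]

theorem card_edgeFinset_eq_add_degree (H : SimpleGraph V) [DecidableRel H.Adj] (x : V) :
    #H.edgeFinset = #(H.deleteIncidenceSet x).edgeFinset + H.degree x := by
  have := card_le_card (H.incidenceFinset_subset x)
  rw [card_incidenceFinset_eq_degree] at this
  rw [card_edgeFinset_deleteIncidenceSet]
  omega

variable (G : SimpleGraph V) [DecidableRel G.Adj]

theorem degree_monochromatic_flip_add_degree_monochromatic (c : V → Bool) (u : V) :
    (G.monochromatic (Function.update c u (!c u))).degree u + (G.monochromatic c).degree u =
      G.degree u := by
  have hsame : (G.monochromatic c).neighborFinset u = {w ∈ G.neighborFinset u | c u = c w} := by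
    ext w; simp
  have hdiff : (G.monochromatic (Function.update c u (!c u))).neighborFinset u =
      {w ∈ G.neighborFinset u | c u ≠ c w} := by
    ext w
    simp only [mem_neighborFinset, monochromatic_adj, mem_filter, Function.update_self]
    refine and_congr_right fun huw => ?_
    rw [Function.update_of_ne huw.ne', Bool.not_eq_eq_eq_not, Bool.eq_not]
  rw [← card_neighborFinset_eq_degree, ← card_neighborFinset_eq_degree,
    ← card_neighborFinset_eq_degree, hsame, hdiff, add_comm]
  exact card_filter_add_card_filter_not _

theorem card_edgeFinset_monochromatic_flip (c : V → Bool) (u : V) :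
    #(G.monochromatic (Function.update c u (!c u))).edgeFinset + (G.monochromatic c).degree u =
      #(G.monochromatic c).edgeFinset +
        (G.monochromatic (Function.update c u (!c u))).degree u := by
  have hrest : ((G.monochromatic (Function.update c u (!c u))).deleteIncidenceSet u).edgeFinset =
      ((G.monochromatic c).deleteIncidenceSet u).edgeFinset := by
    ext; simp only [mem_edgeFinset, deleteIncidenceSet_monochromatic_update]
  rw [card_edgeFinset_eq_add_degree _ u, card_edgeFinset_eq_add_degree (G.monochromatic c) u, hrest]
  omega

theorem two_mul_degree_monochromatic_le_of_forall_le {c : V → Bool}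
    (hc : ∀ c', #(G.monochromatic c).edgeFinset ≤ #(G.monochromatic c').edgeFinset) (u : V) :
    2 * (G.monochromatic c).degree u ≤ G.degree u := by
  have hmin := hc (Function.update c u (!c u))
  have hflip := G.card_edgeFinset_monochromatic_flip c u
  have hsplit := G.degree_monochromatic_flip_add_degree_monochromatic c u
  omega

theorem exists_forall_two_mul_degree_monochromatic_le :
    ∃ c : V → Bool, ∀ u, 2 * (G.monochromatic c).degree u ≤ G.degree u := by
  obtain ⟨c, -, hc⟩ := exists_min_image univ (fun c => #(G.monochromatic c).edgeFinset)
    univ_nonempty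
  exact ⟨c, G.two_mul_degree_monochromatic_le_of_forall_le fun c' => hc c' (mem_univ c')⟩

end SimpleGraph

theorem subcubic_matching_contraction_bipartite_general {V : Type*} [Fintype V]
    (G : SimpleGraph V) [DecidableRel G.Adj]
    (hdeg : ∀ v : V, G.degree v ≤ 3) :
    ∃ M : Set (Sym2 V), M ⊆ G.edgeSet ∧
      (∀ e ∈ M, ∀ f ∈ M, ∀ v : V, v ∈ e → v ∈ f → e = f) ∧
      ∃ c : V → Bool, ∀ u v : V, G.Adj u v →
        (s(u, v) ∈ M → c u = c v) ∧ (s(u, v) ∉ M → c u ≠ c v) := by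
  classical
  obtain ⟨c, hc⟩ := G.exists_forall_two_mul_degree_monochromatic_le
  have hmatching : ∀ v, (G.monochromatic c).degree v ≤ 1 := fun v => by
    have := hc v
    have := hdeg v
    omega
  refine ⟨(G.monochromatic c).edgeSet, SimpleGraph.edgeSet_mono (G.monochromatic_le c),
    fun _ he _ hf _ hve hvf =>
      SimpleGraph.eq_of_mem_edgeSet_of_degree_le_one hmatching he hf hve hvf, c,
    fun _ _ huv =>
      ⟨fun h => (SimpleGraph.monochromatic_adj.mp h).2, fun h hcol => h ⟨huv, hcol⟩⟩⟩

/-- Every finite simple graph of maximum degree at most 3 admits a matching M whose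
contraction yields a bipartite multigraph: there is a 2-coloring of the vertices that is
constant on each matching edge and proper on every other edge. -/
theorem subcubic_matching_contraction_bipartite {V : Type*} [Fintype V] [DecidableEq V]
    (G : SimpleGraph V) [DecidableRel G.Adj]
    (hdeg : ∀ v : V, G.degree v ≤ 3) :
    ∃ M : Set (Sym2 V), M ⊆ G.edgeSet ∧
      (∀ e ∈ M, ∀ f ∈ M, ∀ v : V, v ∈ e → v ∈ f → e = f) ∧
      ∃ c : V → Bool, ∀ u v : V, G.Adj u v →
        (s(u, v) ∈ M → c u = c v) ∧ (s(u, v) ∉ M → c u ≠ c v) :=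
  subcubic_matching_contraction_bipartite_general G hdeg
end

section
/- Let (yᵢ) be an exploding sequence with y₃ > 0. Define points pᵢ = (i, yᵢ) in the plane. Then for all indices j < i < k with 3 ≤ i, the point pᵢ lies strictly below the line through p_j and p_k; that is, the points p₁, p₂, p₃, … are in convex position forming a concave-up chain. Concretely: for j < i < k, (yᵢ − y_j)/(i − j) < (y_k − yᵢ)/(k − i). -/
/-- The points pᵢ = (i, yᵢ) of an exploding sequence form a strictly convex (concave-up)
chain: for j < i < k the slope from p_j to p_i is strictly less than the slope from p_i
to p_k. -/
theorem exploding_points_convex (y : ℕ → ℝ)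
    (h1 : y 1 = 0) (h2 : y 2 = 0)
    (hexp : ∀ i : ℕ, 2 ≤ i → y (i + 1) > 2 * y i + y (i - 1))
    (h3 : 0 < y 3) :
    ∀ j i k : ℕ, 1 ≤ j → j < i → i < k →
      (y i - y j) / ((i : ℝ) - (j : ℝ)) < (y k - y i) / ((k : ℝ) - (i : ℝ)) := by
  -- nonnegativity
  have ynn : ∀ i : ℕ, 1 ≤ i → 0 ≤ y i := by
    intro i
    induction i using Nat.strong_induction_on with
    | _ i ih =>
      intro hi
      match i, hi with
      | 1, _ => simp [h1]
      | 2, _ => simp [h2]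
      | (m+3), _ =>
        have hm : 2 ≤ m + 2 := by omega
        have := hexp (m+2) hm
        have hprev : 0 ≤ y (m+2) := ih (m+2) (by omega) (by omega)
        have hprev2 : 0 ≤ y (m+1) := ih (m+1) (by omega) (by omega)
        have : y (m+2+1) > 2 * y (m+2) + y (m+2-1) := this
        simp only [show m+2-1 = m+1 from rfl] at this
        nlinarith
  -- successive difference monotonicity
  have dsucc : ∀ i : ℕ, 2 ≤ i → y i - y (i-1) < y (i+1) - y i := by
    intro i hi
    have := hexp i hi
    have h0 : 0 ≤ y (i-1) := ynn (i-1) (by omega)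
    nlinarith
  have dmono : ∀ a b : ℕ, 1 ≤ a → a < b → y (a+1) - y a < y (b+1) - y b := by
    intro a b ha hab
    induction b, hab using Nat.le_induction with
    | base =>
      have := dsucc (a+1) (by omega)
      simpa using this
    | succ b hb ih =>
      have h1' := dsucc (b+1) (by omega)
      simp only [Nat.add_sub_cancel] at h1'
      exact lt_trans ih h1'
  have upper : ∀ j i : ℕ, 1 ≤ j → j < i →
      y i - y j ≤ ((i:ℝ) - (j:ℝ)) * (y i - y (i-1)) := by
    intro j i hj hji
    induction i, hji using Nat.le_induction with
    | base =>
      have heq : j + 1 - 1 = j := rfl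
      have hc : ((j+1:ℕ):ℝ) - (j:ℝ) = 1 := by push_cast; ring
      rw [heq, hc, one_mul]
    | succ i hi ih =>
      have hd : y i - y (i-1) ≤ y (i+1) - y i := by
        have := dmono (i-1) i (by omega) (by omega)
        have heq : (i-1)+1 = i := by omega
        rw [heq] at this
        linarith
      have hij : (1:ℝ) ≤ (i:ℝ) - (j:ℝ) := by
        have : (j:ℝ) + 1 ≤ (i:ℝ) := by exact_mod_cast hi
        linarith
      have key : y (i+1) - y j ≤ ((i:ℝ) - (j:ℝ)) * (y (i+1) - y i) + (y (i+1) - y i) := by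
        have := mul_le_mul_of_nonneg_left hd (by linarith : (0:ℝ) ≤ (i:ℝ) - (j:ℝ))
        linarith
      have : ((i:ℝ) + 1 - (j:ℝ)) * (y (i+1) - y i) =
          ((i:ℝ) - (j:ℝ)) * (y (i+1) - y i) + (y (i+1) - y i) := by ring
      simp only [Nat.add_sub_cancel]
      push_cast
      linarith
  have lower : ∀ i k : ℕ, 1 ≤ i → i < k →
      ((k:ℝ) - (i:ℝ)) * (y (i+1) - y i) ≤ y k - y i := by
    intro i k hi hik
    induction k, hik using Nat.le_induction with
    | base =>
      have hc : ((i+1:ℕ):ℝ) - (i:ℝ) = 1 := by push_cast; ring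
      rw [hc, one_mul]
    | succ k hk ih =>
      have hd : y (i+1) - y i ≤ y (k+1) - y k :=
        le_of_lt (dmono i k hi (by omega))
      have hik' : (1:ℝ) ≤ (k:ℝ) - (i:ℝ) := by
        have : (i:ℝ) + 1 ≤ (k:ℝ) := by exact_mod_cast hk
        linarith
      push_cast
      nlinarith
  intro j i k hj hji hik
  have hi1 : 1 ≤ i := by omega
  have hdi : y i - y (i-1) < y (i+1) - y i := by
    have := dmono (i-1) i (by omega) (by omega)
    have heq : (i-1)+1 = i := by omega
    rw [heq] at this
    exact this
  have hji' : (0:ℝ) < (i:ℝ) - (j:ℝ) := by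
    have : (j:ℝ) < (i:ℝ) := by exact_mod_cast hji
    linarith
  have hik' : (0:ℝ) < (k:ℝ) - (i:ℝ) := by
    have : (i:ℝ) < (k:ℝ) := by exact_mod_cast hik
    linarith
  have hu := upper j i hj hji
  have hl := lower i k hi1 hik
  rw [div_lt_div_iff₀ hji' hik']
  calc (y i - y j) * ((k:ℝ) - (i:ℝ))
      ≤ (((i:ℝ) - (j:ℝ)) * (y i - y (i-1))) * ((k:ℝ) - (i:ℝ)) := by
        exact mul_le_mul_of_nonneg_right hu (le_of_lt hik')
    _ < (((i:ℝ) - (j:ℝ)) * (y (i+1) - y i)) * ((k:ℝ) - (i:ℝ)) := by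
        apply mul_lt_mul_of_pos_right _ hik'
        exact mul_lt_mul_of_pos_left hdi hji'
    _ = ((i:ℝ) - (j:ℝ)) * (((k:ℝ) - (i:ℝ)) * (y (i+1) - y i)) := by ring
    _ ≤ ((i:ℝ) - (j:ℝ)) * (y k - y i) := by
        exact mul_le_mul_of_nonneg_left hl (le_of_lt hji')
    _ = (y k - y i) * ((i:ℝ) - (j:ℝ)) := by ring
end

section
/- Consider a linear order v₁ < v₂ < … < v_n on the vertices of a graph G together with an assignment of each edge to one of two pages (upper or lower half-plane) such that no two edges on the same page cross (edges v_a v_b and v_c v_d with a < c < b < d cannot be on the same page) and such that for each vertex v_j all back-edges v_i v_j with i < j − 1 lie on the same page (one-sidedness). If e = v_i v_j with i < j is an edge on the upper page, then at most 2 vertices v_k with k > j are adjacent to both v_i and v_j. -/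
/-- From three distinct elements satisfying `P` we can extract an ordered triple. -/
lemma exists_ordered_triple {α : Type*} [LinearOrder α] {P : α → Prop} {a b c : α}
    (ha : P a) (hb : P b) (hc : P c) (hab : a ≠ b) (hac : a ≠ c) (hbc : b ≠ c) :
    ∃ x y z, x < y ∧ y < z ∧ P x ∧ P y ∧ P z := by
  rcases lt_trichotomy a b with h1 | h1 | h1
  · rcases lt_trichotomy b c with h2 | h2 | h2
    · exact ⟨a, b, c, h1, h2, ha, hb, hc⟩
    · exact absurd h2 hbc
    · rcases lt_trichotomy a c with h3 | h3 | h3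
      · exact ⟨a, c, b, h3, h2, ha, hc, hb⟩
      · exact absurd h3 hac
      · exact ⟨c, a, b, h3, h1, hc, ha, hb⟩
  · exact absurd h1 hab
  · rcases lt_trichotomy a c with h2 | h2 | h2
    · exact ⟨b, a, c, h1, h2, hb, ha, hc⟩
    · exact absurd h2 hac
    · rcases lt_trichotomy b c with h3 | h3 | h3
      · exact ⟨b, c, a, h3, h2, hb, hc, ha⟩
      · exact absurd h3 hbc
      · exact ⟨c, b, a, h3, h1, hc, hb, ha⟩

/-- Claim 1 (|XR(e)| ≤ 2): in a one-sided non-crossing 2-page drawing, an edge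
e = v_i v_j (i < j) on the upper page has at most two common neighbors of its endpoints
to the right of position j. -/
theorem onesided_XR_le_two {n : ℕ} (G : SimpleGraph (Fin n)) [DecidableRel G.Adj]
    (page : Fin n → Fin n → Bool)
    (hsym : ∀ a b, page a b = page b a)
    (hcross : ∀ a b c d : Fin n, G.Adj a b → G.Adj c d →
      a < c → c < b → b < d → page a b ≠ page c d)
    (hone : ∀ j i i' : Fin n, G.Adj i j → G.Adj i' j →
      i.val + 1 < j.val → i'.val + 1 < j.val → page i j = page i' j)
    (i j : Fin n) (hij : i < j) (hadj : G.Adj i j) (hpage : page i j = true) :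
    (Finset.univ.filter (fun k : Fin n => j < k ∧ G.Adj i k ∧ G.Adj j k)).card ≤ 2 := by
  by_contra h
  push_neg at h
  obtain ⟨t, hts, hcard⟩ := Finset.exists_subset_card_eq h
  obtain ⟨a, b, c, hab, hac, hbc, rfl⟩ := Finset.card_eq_three.mp hcard
  have ha := hts (by simp : a ∈ ({a, b, c} : Finset (Fin n)))
  have hb := hts (by simp : b ∈ ({a, b, c} : Finset (Fin n)))
  have hc := hts (by simp : c ∈ ({a, b, c} : Finset (Fin n)))
  simp only [Finset.mem_filter] at ha hb hc
  obtain ⟨k₁, k₂, k₃, h12, h23, hP1, hP2, hP3⟩ :=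
    exists_ordered_triple (P := fun k => j < k ∧ G.Adj i k ∧ G.Adj j k) ha.2 hb.2 hc.2 hab hac hbc
  obtain ⟨hjk₁, hik₁, hjk₁'⟩ := hP1
  obtain ⟨hjk₂, hik₂, hjk₂'⟩ := hP2
  obtain ⟨hjk₃, hik₃, hjk₃'⟩ := hP3
  -- one-sidedness at k₂
  have hij' : (i : ℕ) < j := hij
  have hjk₁v : (j : ℕ) < k₁ := hjk₁
  have h12v : (k₁ : ℕ) < k₂ := h12
  have h23v : (k₂ : ℕ) < k₃ := h23
  have heq : page i k₂ = page j k₂ :=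
    hone k₂ i j hik₂ hjk₂' (by omega) (by omega)
  have h1 : page i k₁ ≠ page j k₂ := hcross i k₁ j k₂ hik₁ hjk₂' hij hjk₁ h12
  have h2 : page i k₁ ≠ page j k₃ :=
    hcross i k₁ j k₃ hik₁ hjk₃' hij hjk₁ (lt_trans h12 h23)
  have h3 : page i k₂ ≠ page j k₃ := hcross i k₂ j k₃ hik₂ hjk₃' hij hjk₂ h23
  rw [heq] at h3
  cases hb1 : page i k₁ <;> cases hb2 : page j k₂ <;> cases hb3 : page j k₃ <;>
    simp_all
end

section
/- In a one-sided non-crossing 2-page drawing of a graph, among any three vertices lying to the right of both endpoints of a common edge e = v_i v_j and adjacent to both endpoints, two of them have their back-edges to v_i and v_j on the same page, and then the four edges involved force a crossing; hence such a configuration is impossible. Formally: there do not exist indices i < j < k₁ < k₂ < k₃ such that v_{k₁}, v_{k₂}, v_{k₃} are all adjacent to both v_i and v_j, in any one-sided non-crossing 2-page drawing. -/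
/-- In a one-sided non-crossing 2-page drawing there cannot exist an edge v_i v_j
together with three vertices to the right of both endpoints that are adjacent to both. -/
theorem no_three_right_common_neighbors {n : ℕ} (G : SimpleGraph (Fin n))
    (page : Fin n → Fin n → Bool)
    (hsym : ∀ a b, page a b = page b a)
    (hcross : ∀ a b c d : Fin n, G.Adj a b → G.Adj c d →
      a < c → c < b → b < d → page a b ≠ page c d)
    (hone : ∀ j i i' : Fin n, G.Adj i j → G.Adj i' j →
      i.val + 1 < j.val → i'.val + 1 < j.val → page i j = page i' j) :
    ¬ ∃ i j k₁ k₂ k₃ : Fin n, i < j ∧ j < k₁ ∧ k₁ < k₂ ∧ k₂ < k₃ ∧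
      G.Adj i j ∧
      G.Adj i k₁ ∧ G.Adj j k₁ ∧
      G.Adj i k₂ ∧ G.Adj j k₂ ∧
      G.Adj i k₃ ∧ G.Adj j k₃ := by
  rintro ⟨i, j, k₁, k₂, k₃, hij, hjk1, h12, h23, _, hik1, hjk1', hik2, hjk2, hik3, hjk3⟩
  have vij : i.val < j.val := hij
  have vjk1 : j.val < k₁.val := hjk1
  have v12 : k₁.val < k₂.val := h12
  have v23 : k₂.val < k₃.val := h23
  have h2 : page i k₂ = page j k₂ := hone k₂ i j hik2 hjk2 (by omega) (by omega)
  have h3 : page i k₃ = page j k₃ := hone k₃ i j hik3 hjk3 (by omega) (by omega)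
  have c1 : page i k₂ ≠ page j k₃ :=
    hcross i k₂ j k₃ hik2 hjk3 hij (lt_trans hjk1 h12) h23
  have c2 : page i k₁ ≠ page j k₂ := hcross i k₁ j k₂ hik1 hjk2 hij hjk1 h12
  have c3 : page i k₁ ≠ page j k₃ := hcross i k₁ j k₃ hik1 hjk3 hij hjk1 (lt_trans h12 h23)
  rw [← h2] at c2
  rw [← h3] at c3 c1
  cases h : page i k₁ <;> cases h' : page i k₂ <;> cases h'' : page i k₃ <;> simp_all
end

section
/- There exists a 2-tree on 499 vertices that admits no one-sided non-crossing 2-page book embedding; consequently not every 2-tree is POSH. -/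
/-- Add a new vertex (the last element of `Fin (n+1)`) adjacent exactly to `u` and `v`
(stacking a vertex over the edge `uv`). -/
def stackExtend {n : ℕ} (G : SimpleGraph (Fin n)) (u v : Fin n) :
    SimpleGraph (Fin (n + 1)) :=
  SimpleGraph.fromRel (fun a b =>
    (∃ a' b' : Fin n, a = a'.castSucc ∧ b = b'.castSucc ∧ G.Adj a' b') ∨
    (a = Fin.last n ∧ (b = u.castSucc ∨ b = v.castSucc)))

/-- 2-trees: K₃ is a 2-tree, and stacking a new vertex over an edge of a 2-tree gives a
2-tree. -/
inductive IsTwoTree : (n : ℕ) → SimpleGraph (Fin n) → Prop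
  | base : IsTwoTree 3 ⊤
  | stack {n : ℕ} {G : SimpleGraph (Fin n)} (u v : Fin n) (huv : G.Adj u v)
      (hG : IsTwoTree n G) : IsTwoTree (n + 1) (stackExtend G u v)

/-- parents of each vertex of the witness 2-tree -/
def par (v : ℕ) : ℕ × ℕ :=
  if v < 9 then (0, 1)
  else if v < 79 then ((v - 9) / 5 % 2, 2 + (v - 9) / 5 / 2)
  else
    (if (v - 79) / 3 % 2 = 0 then (v - 79) / 3 / 2 / 5 % 2
     else 2 + (v - 79) / 3 / 2 / 5 / 2,
     9 + (v - 79) / 3 / 2)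

def nrel (a b : ℕ) : Prop :=
  (a = 0 ∧ b = 1) ∨ (2 ≤ b ∧ ((par b).1 = a ∨ (par b).2 = a))

instance : DecidablePred (fun p : ℕ × ℕ => nrel p.1 p.2) := by
  intro p; unfold nrel; infer_instance

instance (a b : ℕ) : Decidable (nrel a b) := by unfold nrel; infer_instance

/-- the witness graph on `Fin n` -/
def Gf (n : ℕ) : SimpleGraph (Fin n) :=
  SimpleGraph.fromRel (fun a b => nrel a.val b.val)

lemma par_lt {v : ℕ} (h2 : 2 ≤ v) : (par v).1 < (par v).2 ∧ (par v).2 < v := by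
  unfold par
  split_ifs with h1 h3 h4 <;> simp only <;> omega

lemma nrel_lt {a b : ℕ} (h : nrel a b) : a < b := by
  rcases h with ⟨rfl, rfl⟩ | ⟨h2, h⟩
  · omega
  · rcases par_lt h2 with ⟨h3, h4⟩ <;> omega

lemma par_edge {n : ℕ} (h2 : 2 ≤ n) (h499 : n ≤ 498) : nrel (par n).1 (par n).2 := by
  by_cases h9 : n < 9
  · left; unfold par; rw [if_pos h9]; exact ⟨rfl, rfl⟩
  · by_cases h79 : n < 79
    · right
      have hp : par n = ((n - 9) / 5 % 2, 2 + (n - 9) / 5 / 2) := by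
        unfold par; rw [if_neg h9, if_pos h79]
      rw [hp]
      have hj : (n - 9) / 5 < 14 := by omega
      constructor
      · omega
      · have hb : par (2 + (n - 9) / 5 / 2) = (0, 1) := by
          unfold par; rw [if_pos (by omega)]
        rw [hb]; omega
    · right
      have hq : (n - 79) / 3 / 2 ≤ (n - 79) / 6 := by omega
      have hp : par n = (if (n - 79) / 3 % 2 = 0 then (n - 79) / 3 / 2 / 5 % 2
          else 2 + (n - 79) / 3 / 2 / 5 / 2, 9 + (n - 79) / 3 / 2) := by
        unfold par; rw [if_neg h9, if_neg h79]
      rw [hp]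
      have hb : par (9 + (n - 79) / 3 / 2)
          = ((9 + (n - 79) / 3 / 2 - 9) / 5 % 2, 2 + (9 + (n - 79) / 3 / 2 - 9) / 5 / 2) := by
        unfold par; rw [if_neg (by omega), if_pos (by omega)]
      constructor
      · omega
      · rw [hb]
        simp only
        have : (9 + (n - 79) / 3 / 2 - 9) = (n - 79) / 3 / 2 := by omega
        rw [this]
        split_ifs with hr
        · left; rfl
        · right; rfl

lemma Gf_adj {n : ℕ} {a b : Fin n} :
    (Gf n).Adj a b ↔ a ≠ b ∧ (nrel a.val b.val ∨ nrel b.val a.val) := by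
  unfold Gf; rw [SimpleGraph.fromRel_adj]

lemma Gf_three : Gf 3 = (⊤ : SimpleGraph (Fin 3)) := by
  ext a b
  rw [Gf_adj, SimpleGraph.top_adj]
  revert a b
  decide

lemma Gf_step {n : ℕ} (h3 : 3 ≤ n) (h499 : n ≤ 498) :
    Gf (n + 1) = stackExtend (Gf n)
      ⟨(par n).1, by have := par_lt (show 2 ≤ n by omega); omega⟩
      ⟨(par n).2, by have := par_lt (show 2 ≤ n by omega); omega⟩ := by
  have hpl := par_lt (show 2 ≤ n by omega)
  ext a b
  rw [Gf_adj]
  unfold stackExtend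
  rw [SimpleGraph.fromRel_adj]
  constructor
  · rintro ⟨hab, h⟩
    refine ⟨hab, ?_⟩
    rcases h with h | h
    · have hblt := nrel_lt h
      by_cases hbn : b.val < n
      · have han : a.val < n := by omega
        have hne : a.val ≠ b.val := by omega
        left; left
        exact ⟨⟨a.val, han⟩, ⟨b.val, hbn⟩, by ext; simp, by ext; simp,
          Gf_adj.mpr ⟨by simp only [ne_eq, Fin.mk.injEq]; exact hne, Or.inl h⟩⟩
      · have hbn' : b.val = n := by omega
        have hpar : (par n).1 = a.val ∨ (par n).2 = a.val := by
          rcases h with ⟨h0, h1⟩ | ⟨h2, h⟩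
          · omega
          · rwa [hbn'] at h
        right; right
        refine ⟨Fin.ext (by simp [Fin.val_last, hbn']), ?_⟩
        rcases hpar with h' | h'
        · left; exact Fin.ext (by simp; omega)
        · right; exact Fin.ext (by simp; omega)
    · have hblt := nrel_lt h
      by_cases han : a.val < n
      · have hbn : b.val < n := by omega
        have hne : a.val ≠ b.val := by omega
        left; left
        exact ⟨⟨a.val, han⟩, ⟨b.val, hbn⟩, by ext; simp, by ext; simp,
          Gf_adj.mpr ⟨by simp only [ne_eq, Fin.mk.injEq]; exact hne, Or.inr h⟩⟩
      · have han' : a.val = n := by omega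
        have hpar : (par n).1 = b.val ∨ (par n).2 = b.val := by
          rcases h with ⟨h0, h1⟩ | ⟨h2, h⟩
          · omega
          · rwa [han'] at h
        left; right
        refine ⟨Fin.ext (by simp [Fin.val_last, han']), ?_⟩
        rcases hpar with h' | h'
        · left; exact Fin.ext (by simp; omega)
        · right; exact Fin.ext (by simp; omega)
  · rintro ⟨hab, h⟩
    refine ⟨hab, ?_⟩
    rcases h with (⟨a', b', ha, hb, hadj⟩ | ⟨ha, hb⟩) | (⟨a', b', ha, hb, hadj⟩ | ⟨ha, hb⟩)
    · have hav : (a : ℕ) = a'.val := by rw [ha]; simp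
      have hbv : (b : ℕ) = b'.val := by rw [hb]; simp
      rcases Gf_adj.mp hadj with ⟨_, h | h⟩
      · left; rw [hav, hbv]; exact h
      · right; rw [hbv, hav]; exact h
    · have hav : (a : ℕ) = n := by rw [ha]; simp
      have hbv : (b : ℕ) = (par n).1 ∨ (b : ℕ) = (par n).2 := by
        rcases hb with hb | hb
        · left; rw [hb]; simp
        · right; rw [hb]; simp
      right
      rw [hav]
      refine Or.inr ⟨by omega, ?_⟩
      rcases hbv with h' | h'
      · exact Or.inl h'.symm
      · exact Or.inr h'.symm
    · have hav : (a : ℕ) = b'.val := by rw [hb]; simp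
      have hbv : (b : ℕ) = a'.val := by rw [ha]; simp
      rcases Gf_adj.mp hadj with ⟨_, h | h⟩
      · right; rw [hav, hbv]; exact h
      · left; rw [hav, hbv]; exact h
    · have hbv : (b : ℕ) = n := by rw [ha]; simp
      have hav : (a : ℕ) = (par n).1 ∨ (a : ℕ) = (par n).2 := by
        rcases hb with hb | hb
        · left; rw [hb]; simp
        · right; rw [hb]; simp
      left
      rw [hbv]
      refine Or.inr ⟨by omega, ?_⟩
      rcases hav with h' | h'
      · exact Or.inl h'.symm
      · exact Or.inr h'.symm

lemma isTwoTree_Gf : ∀ n, 3 ≤ n → n ≤ 499 → IsTwoTree n (Gf n) := by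
  intro n
  induction n with
  | zero => omega
  | succ m ih =>
    intro h3 h499
    by_cases hm : m < 3
    · have : m = 2 := by omega
      subst this
      rw [show (2 + 1) = 3 from rfl, Gf_three]; exact IsTwoTree.base
    · have h3' : 3 ≤ m := by omega
      have h498 : m ≤ 498 := by omega
      rw [Gf_step h3' h498]
      refine IsTwoTree.stack _ _ ?_ (ih h3' (by omega))
      rw [Gf_adj]
      constructor
      · simp [Fin.ext_iff]; exact Nat.ne_of_lt (par_lt (by omega)).1
      · left; exact par_edge (by omega) h498

/-! ### children formulas -/

def kid1 (x c k : ℕ) : ℕ := 9 + 5 * (2 * (c - 2) + x) + k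

def kid2 (t r k : ℕ) : ℕ := 79 + 3 * (2 * (t - 9) + r) + k

lemma kid1_par {x c k : ℕ} (hx : x < 2) (hc2 : 2 ≤ c) (hc8 : c ≤ 8) (hk : k < 5) :
    par (kid1 x c k) = (x, c) ∧ 9 ≤ kid1 x c k ∧ kid1 x c k ≤ 78 := by
  have h1 : 9 ≤ kid1 x c k := by unfold kid1; omega
  have h2 : kid1 x c k ≤ 78 := by unfold kid1; omega
  refine ⟨?_, h1, h2⟩
  have hj : (kid1 x c k - 9) / 5 = 2 * (c - 2) + x := by unfold kid1; omega
  unfold par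
  rw [if_neg (by omega), if_pos (by omega), hj]
  have e1 : (2 * (c - 2) + x) % 2 = x := by omega
  have e2 : 2 + (2 * (c - 2) + x) / 2 = c := by omega
  rw [e1, e2]

lemma kid2_par {t r k : ℕ} (ht9 : 9 ≤ t) (ht78 : t ≤ 78) (hr : r < 2) (hk : k < 3) :
    par (kid2 t r k) = ((if r = 0 then (par t).1 else (par t).2), t) ∧
      79 ≤ kid2 t r k ∧ kid2 t r k ≤ 498 := by
  have h1 : 79 ≤ kid2 t r k := by unfold kid2; omega
  have h2 : kid2 t r k ≤ 498 := by unfold kid2; omega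
  refine ⟨?_, h1, h2⟩
  rw [Prod.ext_iff]
  unfold par kid2
  constructor <;> simp only <;> split_ifs <;> omega

lemma nrel_root_aux : True := trivial

lemma nrel_root {c : ℕ} (hc2 : 2 ≤ c) (hc8 : c ≤ 8) : nrel 0 c ∧ nrel 1 c := by
  have hp : par c = (0, 1) := by unfold par; rw [if_pos (by omega)]
  constructor
  · exact Or.inr ⟨hc2, Or.inl (by rw [hp])⟩
  · exact Or.inr ⟨hc2, Or.inr (by rw [hp])⟩

lemma nrel_kid1 {x c k : ℕ} (hx : x < 2) (hc2 : 2 ≤ c) (hc8 : c ≤ 8) (hk : k < 5) :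
    nrel x (kid1 x c k) ∧ nrel c (kid1 x c k) := by
  obtain ⟨hp, h9, h78⟩ := kid1_par hx hc2 hc8 hk
  exact ⟨Or.inr ⟨by omega, Or.inl (by rw [hp])⟩, Or.inr ⟨by omega, Or.inr (by rw [hp])⟩⟩

lemma nrel_kid2 {x c t k : ℕ} (hx : x < 2) (hc2 : 2 ≤ c) (hc8 : c ≤ 8)
    (ht : par t = (x, c)) (ht9 : 9 ≤ t) (ht78 : t ≤ 78) (hk : k < 3) :
    (nrel x (kid2 t 0 k) ∧ nrel t (kid2 t 0 k)) ∧
    (nrel c (kid2 t 1 k) ∧ nrel t (kid2 t 1 k)) := by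
  obtain ⟨hp0, h79a, h498a⟩ := kid2_par ht9 ht78 (show (0:ℕ) < 2 by omega) hk
  obtain ⟨hp1, h79b, h498b⟩ := kid2_par ht9 ht78 (show (1:ℕ) < 2 by omega) hk
  simp [ht] at hp0 hp1
  exact ⟨⟨Or.inr ⟨by omega, Or.inl (by rw [hp0])⟩, Or.inr ⟨by omega, Or.inr (by rw [hp0])⟩⟩,
    ⟨Or.inr ⟨by omega, Or.inl (by rw [hp1])⟩, Or.inr ⟨by omega, Or.inr (by rw [hp1])⟩⟩⟩

lemma bEq {a b c : Bool} (h1 : a ≠ c) (h2 : b ≠ c) : a = b := by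
  revert h1 h2; cases a <;> cases b <;> cases c <;> simp

lemma bNe3 {a b c : Bool} (h1 : a ≠ b) (h2 : a ≠ c) (h3 : b ≠ c) : False := by
  revert h1 h2 h3; cases a <;> cases b <;> cases c <;> simp

lemma sort3 {ι : Sort*} (f : ι → ℕ) (Q : ι → Prop) {a b c : ι}
    (qa : Q a) (qb : Q b) (qc : Q c)
    (hab : f a ≠ f b) (hac : f a ≠ f c) (hbc : f b ≠ f c) :
    ∃ p q r, Q p ∧ Q q ∧ Q r ∧ f p < f q ∧ f q < f r := by
  rcases lt_trichotomy (f a) (f b) with h1 | h1 | h1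
  · rcases lt_trichotomy (f b) (f c) with h2 | h2 | h2
    · exact ⟨a, b, c, qa, qb, qc, h1, h2⟩
    · exact absurd h2 hbc
    · rcases lt_trichotomy (f a) (f c) with h3 | h3 | h3
      · exact ⟨a, c, b, qa, qc, qb, h3, h2⟩
      · exact absurd h3 hac
      · exact ⟨c, a, b, qc, qa, qb, h3, h1⟩
  · exact absurd h1 hab
  · rcases lt_trichotomy (f a) (f c) with h2 | h2 | h2
    · exact ⟨b, a, c, qb, qa, qc, h1, h2⟩
    · exact absurd h2 hac
    · rcases lt_trichotomy (f b) (f c) with h3 | h3 | h3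
      · exact ⟨b, c, a, qb, qc, qa, h3, h2⟩
      · exact absurd h3 hbc
      · exact ⟨c, b, a, qc, qb, qa, h3, h1⟩

lemma sort4 {ι : Sort*} (f : ι → ℕ) (Q : ι → Prop) {a b c d : ι}
    (qa : Q a) (qb : Q b) (qc : Q c) (qd : Q d)
    (hab : f a ≠ f b) (hac : f a ≠ f c) (had : f a ≠ f d)
    (hbc : f b ≠ f c) (hbd : f b ≠ f d) (hcd : f c ≠ f d) :
    ∃ p q r s, Q p ∧ Q q ∧ Q r ∧ Q s ∧ f p < f q ∧ f q < f r ∧ f r < f s := by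
  obtain ⟨p, q, r, hp, hq, hr, h1, h2⟩ :=
    sort3 f (fun i => Q i ∧ f i ≠ f a) ⟨qb, fun h => hab h.symm⟩
      ⟨qc, fun h => hac h.symm⟩ ⟨qd, fun h => had h.symm⟩ hbc hbd hcd
  obtain ⟨⟨hp, hpa⟩, ⟨hq, hqa⟩, ⟨hr, hra⟩⟩ := And.intro hp (And.intro hq hr)
  rcases lt_trichotomy (f a) (f p) with h3 | h3 | h3
  · exact ⟨a, p, q, r, qa, hp, hq, hr, h3, h1, h2⟩
  · exact absurd h3.symm hpa
  · rcases lt_trichotomy (f a) (f q) with h4 | h4 | h4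
    · exact ⟨p, a, q, r, hp, qa, hq, hr, h3, h4, h2⟩
    · exact absurd h4.symm hqa
    · rcases lt_trichotomy (f a) (f r) with h5 | h5 | h5
      · exact ⟨p, q, a, r, hp, hq, qa, hr, h1, h4, h5⟩
      · exact absurd h5.symm hra
      · exact ⟨p, q, r, a, hp, hq, hr, qa, h1, h2, h5⟩

lemma three_of_card {α : Type*} [DecidableEq α] {s : Finset α} (h : 3 ≤ s.card) :
    ∃ a b c, a ∈ s ∧ b ∈ s ∧ c ∈ s ∧ a ≠ b ∧ a ≠ c ∧ b ≠ c := by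
  obtain ⟨t, hts, hcard3⟩ := Finset.exists_subset_card_eq h
  obtain ⟨a, b, c, hab, hac, hbc, ht⟩ := Finset.card_eq_three.mp hcard3
  rw [ht] at hts
  exact ⟨a, b, c, hts (by simp), hts (by simp), hts (by simp), hab, hac, hbc⟩

lemma two_of_card {α : Type*} {s : Finset α} (h : 2 ≤ s.card) :
    ∃ a b, a ∈ s ∧ b ∈ s ∧ a ≠ b := by
  obtain ⟨a, ha, b, hb, hab⟩ := Finset.one_lt_card.mp h
  exact ⟨a, b, ha, hb, hab⟩

lemma fiber_sum {n m : ℕ} (f : Fin n → Fin m) :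
    ∑ y : Fin m, (Finset.univ.filter (fun i => f i = y)).card = n := by
  rw [← Finset.card_eq_sum_card_fiberwise (fun a _ => Finset.mem_univ (f a))]
  simp

lemma pigeon73 (f : Fin 7 → Fin 3) : ∃ i j k : Fin 7,
    i ≠ j ∧ i ≠ k ∧ j ≠ k ∧ f i = f j ∧ f j = f k := by
  have hmap : ∀ a ∈ (Finset.univ : Finset (Fin 7)), f a ∈ (Finset.univ : Finset (Fin 3)) := by
    simp
  have hcard : (Finset.univ : Finset (Fin 3)).card * 2 < (Finset.univ : Finset (Fin 7)).card := by
    simp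
  obtain ⟨y, _, hy⟩ := Finset.exists_lt_card_fiber_of_mul_lt_card_of_maps_to hmap hcard
  obtain ⟨a, b, c, ha, hb, hc, hab, hac, hbc⟩ :=
    three_of_card (s := Finset.univ.filter (fun x => f x = y)) (by omega)
  simp only [Finset.mem_filter] at ha hb hc
  exact ⟨a, b, c, hab, hac, hbc, by rw [ha.2, hb.2], by rw [hb.2, hc.2]⟩

lemma pigeon52 : ∀ f : Fin 5 → Bool,
    (∃ i j, i ≠ j ∧ f i = true ∧ f j = true) ∨
    (∃ a b c d : Fin 5, a ≠ b ∧ a ≠ c ∧ a ≠ d ∧ b ≠ c ∧ b ≠ d ∧ c ≠ d ∧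
      f a = false ∧ f b = false ∧ f c = false ∧ f d = false) := by decide

lemma pigeon53 (f : Fin 5 → Fin 3)
    (h1 : ¬ ∃ i j k, i ≠ j ∧ i ≠ k ∧ j ≠ k ∧ f i = 1 ∧ f j = 1 ∧ f k = 1)
    (h2 : ¬ ∃ i j, i ≠ j ∧ f i = 2 ∧ f j = 2) :
    ∃ i j, i ≠ j ∧ f i = 0 ∧ f j = 0 := by
  have hsum := fiber_sum f
  rw [Fin.sum_univ_three] at hsum
  have hc1 : (Finset.univ.filter (fun i => f i = 1)).card ≤ 2 := by
    by_contra hgt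
    obtain ⟨a, b, c, ha, hb, hc, hab, hac, hbc⟩ :=
      three_of_card (s := Finset.univ.filter (fun i => f i = 1)) (by omega)
    simp only [Finset.mem_filter] at ha hb hc
    exact h1 ⟨a, b, c, hab, hac, hbc, ha.2, hb.2, hc.2⟩
  have hc2 : (Finset.univ.filter (fun i => f i = 2)).card ≤ 1 := by
    by_contra hgt
    obtain ⟨a, b, ha, hb, hab⟩ :=
      two_of_card (s := Finset.univ.filter (fun i => f i = 2)) (by omega)
    simp only [Finset.mem_filter] at ha hb
    exact h2 ⟨a, b, hab, ha.2, hb.2⟩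
  have hc0 : 2 ≤ (Finset.univ.filter (fun i => f i = 0)).card := by omega
  obtain ⟨a, b, ha, hb, hab⟩ := two_of_card hc0
  simp only [Finset.mem_filter] at ha hb
  exact ⟨a, b, hab, ha.2, hb.2⟩

lemma pigeon54 (f : Fin 5 → Fin 4)
    (h0 : ¬ ∃ i j, i ≠ j ∧ f i = 0 ∧ f j = 0)
    (h1 : ¬ ∃ i j k, i ≠ j ∧ i ≠ k ∧ j ≠ k ∧ f i = 1 ∧ f j = 1 ∧ f k = 1)
    (h2 : ¬ ∃ i j, i ≠ j ∧ f i = 2 ∧ f j = 2)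
    (h3 : ¬ ∃ i j, i ≠ j ∧ f i = 3 ∧ f j = 3) :
    (∃ i, f i = 2) ∧ (∃ j, f j = 3) := by
  have hsum := fiber_sum f
  rw [Fin.sum_univ_four] at hsum
  have hc0 : (Finset.univ.filter (fun i => f i = 0)).card ≤ 1 := by
    by_contra hgt
    obtain ⟨a, b, ha, hb, hab⟩ :=
      two_of_card (s := Finset.univ.filter (fun i => f i = 0)) (by omega)
    simp only [Finset.mem_filter] at ha hb
    exact h0 ⟨a, b, hab, ha.2, hb.2⟩
  have hc1 : (Finset.univ.filter (fun i => f i = 1)).card ≤ 2 := by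
    by_contra hgt
    obtain ⟨a, b, c, ha, hb, hc, hab, hac, hbc⟩ :=
      three_of_card (s := Finset.univ.filter (fun i => f i = 1)) (by omega)
    simp only [Finset.mem_filter] at ha hb hc
    exact h1 ⟨a, b, c, hab, hac, hbc, ha.2, hb.2, hc.2⟩
  have hc2 : (Finset.univ.filter (fun i => f i = 2)).card ≤ 1 := by
    by_contra hgt
    obtain ⟨a, b, ha, hb, hab⟩ :=
      two_of_card (s := Finset.univ.filter (fun i => f i = 2)) (by omega)
    simp only [Finset.mem_filter] at ha hb
    exact h2 ⟨a, b, hab, ha.2, hb.2⟩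
  have hc3 : (Finset.univ.filter (fun i => f i = 3)).card ≤ 1 := by
    by_contra hgt
    obtain ⟨a, b, ha, hb, hab⟩ :=
      two_of_card (s := Finset.univ.filter (fun i => f i = 3)) (by omega)
    simp only [Finset.mem_filter] at ha hb
    exact h3 ⟨a, b, hab, ha.2, hb.2⟩
  have hc2' : 1 ≤ (Finset.univ.filter (fun i => f i = 2)).card := by omega
  have hc3' : 1 ≤ (Finset.univ.filter (fun i => f i = 3)).card := by omega
  obtain ⟨a, ha⟩ := Finset.card_pos.mp
    (show 0 < (Finset.univ.filter (fun i => f i = 2)).card by omega)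
  obtain ⟨b, hb⟩ := Finset.card_pos.mp (show 0 < (Finset.univ.filter (fun i => f i = 3)).card by omega)
  simp only [Finset.mem_filter] at ha hb
  exact ⟨⟨a, ha.2⟩, ⟨b, hb.2⟩⟩

lemma pigeon32 : ∀ f : Fin 3 → Bool, ∃ i j, i ≠ j ∧ f i = f j := by decide

section Comb

variable {A : ℕ → ℕ → Prop} {S : ℕ → Bool}

/-- Case A master: an edge (X,W2) where W2 is a middle inner child of the root (X,Y),
with 5 children provided, each of which has 3 children on its edge to X: contradiction. -/
lemma caseA
    (hs : ∀ {a b}, A a b → A b a)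
    (hcr : ∀ {a c b d}, A a b → A c d → a < c → c < b → b < d → S b ≠ S d)
    {X W1 W2 W3 Y : ℕ}
    (o1 : X < W1) (o2 : W1 < W2) (o3 : W2 < W3) (o4 : W3 < Y)
    (eXY : A X Y) (eXW2 : A X W2) (eW2Y : A W2 Y) (eXW3 : A X W3) (eW1Y : A W1 Y)
    (c5 : Fin 5 → ℕ)
    (e5X : ∀ k, A X (c5 k)) (e5W : ∀ k, A W2 (c5 k))
    (i5 : ∀ k k' : Fin 5, k ≠ k' → c5 k ≠ c5 k')
    (n5 : ∀ k, c5 k ≠ X ∧ c5 k ≠ W1 ∧ c5 k ≠ W2 ∧ c5 k ≠ W3 ∧ c5 k ≠ Y)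
    (c3 : Fin 5 → Fin 3 → ℕ)
    (e3X : ∀ k j, A X (c3 k j)) (e3T : ∀ k j, A (c5 k) (c3 k j))
    (i3 : ∀ k (j j' : Fin 3), j ≠ j' → c3 k j ≠ c3 k j')
    (n3 : ∀ k j, c3 k j ≠ X ∧ c3 k j ≠ Y ∧ c3 k j ≠ W2 ∧ (∀ k', c3 k j ≠ c5 k')) :
    False := by
  set γ := S Y with hγ
  have hW2 : S W2 ≠ γ := hcr eXW2 eW1Y o1 o2 (lt_trans o3 o4)
  have hW3 : S W3 ≠ γ := hcr eXW3 eW1Y o1 (lt_trans o2 o3) o4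
  -- no child of (X, W2) lies left of X
  have hL : ∀ k, ¬ c5 k < X := by
    intro k h
    exact (hcr (hs (e5W k)) eXW3 h (lt_trans o1 o2) o3) (bEq hW2 hW3)
  -- any right child has colour ≠ γ
  have hRc : ∀ k, W2 < c5 k → S (c5 k) ≠ γ := by
    intro k h
    rcases lt_trichotomy (c5 k) Y with h' | h' | h'
    · exact hcr (e5X k) eW2Y (lt_trans o1 o2) h h'
    · exact absurd h' (n5 k).2.2.2.2
    · exact (hcr eXY (e5W k) (lt_trans o1 o2) (lt_trans o3 o4) h').symm
  -- at most one right child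
  have hR1 : ∀ k k', k ≠ k' → W2 < c5 k → W2 < c5 k' → False := by
    intro k k' hkk h h'
    rcases lt_trichotomy (c5 k) (c5 k') with hlt | heq | hgt
    · exact (hcr (e5X k) (e5W k') (lt_trans o1 o2) h hlt) (bEq (hRc k h) (hRc k' h'))
    · exact i5 k k' hkk heq
    · exact (hcr (e5X k') (e5W k) (lt_trans o1 o2) h' hgt) (bEq (hRc k' h') (hRc k h))
  -- hence at least four inner children
  rcases pigeon52 (fun k => decide (W2 < c5 k)) with ⟨i, j, hij, hi, hj⟩ | h4
  · exact hR1 i j hij (of_decide_eq_true hi) (of_decide_eq_true hj)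
  obtain ⟨a, b, c, d, hab, hac, had, hbc, hbd, hcd, fa, fb, fc, fd⟩ := h4
  have inner : ∀ k : Fin 5, decide (W2 < c5 k) = false → X < c5 k ∧ c5 k < W2 := by
    intro k hk
    have h1 := of_decide_eq_false hk
    have h2 := hL k
    have h3 := (n5 k).1
    have h4 := (n5 k).2.2.1
    omega
  obtain ⟨k1, k2, k3, k4, q1, q2, q3, q4, s12, s23, s34⟩ :=
    sort4 c5 (fun k => X < c5 k ∧ c5 k < W2) (inner a fa) (inner b fb) (inner c fc)
      (inner d fd) (i5 a b hab) (i5 a c hac) (i5 a d had) (i5 b c hbc) (i5 b d hbd)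
      (i5 c d hcd)
  -- colours of the three upper inner children
  have hT : ∀ kk : Fin 5, c5 k1 < c5 kk → c5 kk < W2 → S (c5 kk) = γ := by
    intro kk h h2
    exact bEq (hcr (e5X kk) (hs (e5W k1)) q1.1 h h2) (Ne.symm hW2)
  have hT2 : S (c5 k2) = γ := hT k2 s12 q2.2
  have hT3 : S (c5 k3) = γ := hT k3 (lt_trans s12 s23) q3.2
  have hT4 : S (c5 k4) = γ := hT k4 (lt_trans (lt_trans s12 s23) s34) q4.2
  -- every child of (X, c5 k3) lies in one of two slots
  have slot : ∀ j : Fin 3, (c5 k2 < c3 k3 j ∧ c3 k3 j < c5 k3) ∨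
      (c5 k3 < c3 k3 j ∧ c3 k3 j < c5 k4) := by
    intro j
    have hne := n3 k3 j
    rcases lt_trichotomy (c3 k3 j) X with h | h | h
    · -- left of X : crossing (G,T3) × (X,T4) gives S T3 ≠ S T4
      have := hcr (hs (e3T k3 j)) (e5X k4) h q3.1 s34
      rw [hT3, hT4] at this
      exact absurd rfl this
    · exact absurd h hne.1
    · rcases lt_trichotomy (c3 k3 j) (c5 k2) with h2 | h2 | h2
      · -- (X,T2) × (G,T3) gives S T2 ≠ S T3
        have := hcr (e5X k2) (hs (e3T k3 j)) h h2 s23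
        rw [hT2, hT3] at this
        exact absurd rfl this
      · exact absurd h2 (hne.2.2.2 k2)
      · rcases lt_trichotomy (c3 k3 j) (c5 k3) with h3 | h3 | h3
        · exact Or.inl ⟨h2, h3⟩
        · exact absurd h3 (hne.2.2.2 k3)
        · rcases lt_trichotomy (c3 k3 j) (c5 k4) with h4 | h4 | h4
          · exact Or.inr ⟨h3, h4⟩
          · exact absurd h4 (hne.2.2.2 k4)
          · rcases lt_trichotomy (c3 k3 j) W2 with h5 | h5 | h5
            · -- (T4, W2) region
              have hg1 : S (c3 k3 j) = γ :=
                bEq (hcr (e3T k3 j) (hs (e5W k4)) s34 h4 h5) (Ne.symm hW2)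
              have hg2 := hcr (e5X k4) (e3T k3 j) q3.1 s34 h4
              rw [hT4, hg1] at hg2
              exact absurd rfl hg2
            · exact absurd h5 hne.2.2.1
            · rcases lt_trichotomy (c3 k3 j) Y with h6 | h6 | h6
              · -- (W2, Y) region
                have hga : S (c3 k3 j) ≠ γ :=
                  hcr (e3X k3 j) eW2Y (lt_trans o1 o2) h5 h6
                have hgb := hcr eXW2 (e3T k3 j) q3.1 q3.2 h5
                exact absurd (bEq (Ne.symm hgb) (Ne.symm hW2)) hga
              · exact absurd h6 hne.2.1
              · -- beyond Y
                have hgb := hcr eXW2 (e3T k3 j) q3.1 q3.2 h5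
                have hgc : S (c3 k3 j) = γ := bEq (Ne.symm hgb) (Ne.symm hW2)
                have hga := hcr eXY (e3T k3 j) q3.1
                  (lt_trans q3.2 (lt_trans o3 o4)) h6
                exact absurd hgc.symm (fun hh => hga hh)
  -- two of the three children share a slot
  have banA : ∀ j j' : Fin 3, c3 k3 j < c3 k3 j' → c5 k2 < c3 k3 j →
      c5 k2 < c3 k3 j' → c3 k3 j' < c5 k3 → False := by
    intro j j' h12 hja hj'a hj'b
    have hcol : S (c3 k3 j') = γ :=
      bEq (hcr (e3X k3 j') (hs (e5W k2)) q2.1 hj'a (lt_trans hj'b q3.2)) (Ne.symm hW2)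
    have := hcr (e3X k3 j') (hs (e3T k3 j)) (lt_trans q2.1 hja) h12 hj'b
    rw [hcol, hT3] at this
    exact absurd rfl this
  have banB : ∀ j j' : Fin 3, c3 k3 j < c3 k3 j' → c5 k3 < c3 k3 j →
      c3 k3 j < c5 k4 → c3 k3 j' < c5 k4 → False := by
    intro j j' h12 hja hjb hj'b
    have hcolj : S (c3 k3 j) = γ :=
      bEq (hcr (e3X k3 j) (hs (e5W k2)) q2.1 (lt_trans s23 hja)
        (lt_trans hjb q4.2)) (Ne.symm hW2)
    have hcolj' : S (c3 k3 j') = γ :=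
      bEq (hcr (e3X k3 j') (hs (e5W k2)) q2.1 (lt_trans s23 (lt_trans hja h12))
        (lt_trans hj'b q4.2)) (Ne.symm hW2)
    have := hcr (e3X k3 j) (e3T k3 j') q3.1 hja h12
    rw [hcolj, hcolj'] at this
    exact absurd rfl this
  obtain ⟨j1, j2, hj12, hjeq⟩ := pigeon32 (fun j => decide (c5 k3 < c3 k3 j))
  simp only [decide_eq_decide] at hjeq
  rcases slot j1 with sA1 | sB1 <;> rcases slot j2 with sA2 | sB2
  · rcases lt_trichotomy (c3 k3 j1) (c3 k3 j2) with h | h | h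
    · exact banA j1 j2 h sA1.1 sA2.1 sA2.2
    · exact i3 k3 j1 j2 hj12 h
    · exact banA j2 j1 h sA2.1 sA1.1 sA1.2
  · exact absurd (hjeq.mpr sB2.1) (not_lt.mpr (le_of_lt sA1.2))
  · exact absurd (hjeq.mp sB1.1) (not_lt.mpr (le_of_lt sA2.2))
  · rcases lt_trichotomy (c3 k3 j1) (c3 k3 j2) with h | h | h
    · exact banB j1 j2 h sB1.1 sB1.2 sB2.2
    · exact i3 k3 j1 j2 hj12 h
    · exact banB j2 j1 h sB2.1 sB2.2 sB1.2
  
/-- master for the x-edge of a left root-child: no three inner children. -/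
lemma masterX
    (hs : ∀ {a b}, A a b → A b a)
    (hcr : ∀ {a c b d}, A a b → A c d → a < c → c < b → b < d → S b ≠ S d)
    {Z X Y T1 T2 T3 : ℕ}
    (oZX : Z < X) (oXY : X < Y)
    (o1 : Z < T1) (o2 : T1 < T2) (o3 : T2 < T3) (o4 : T3 < X)
    (eZX : A Z X) (eZY : A Z Y) (eXY : A X Y)
    (hXY : S X ≠ S Y)
    (eZT2 : A Z T2) (eT1X : A T1 X) (eT2X : A T2 X)
    (eZT3 : A Z T3) (eT3X : A T3 X)
    (c3 : Fin 3 → ℕ)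
    (e3Z : ∀ j, A Z (c3 j)) (e3T : ∀ j, A T3 (c3 j))
    (i3 : ∀ j j' : Fin 3, j ≠ j' → c3 j ≠ c3 j')
    (n3 : ∀ j, c3 j ≠ Z ∧ c3 j ≠ T2 ∧ c3 j ≠ T3 ∧ c3 j ≠ X ∧ c3 j ≠ Y) :
    False := by
  have hT2 : S T2 ≠ S X := hcr eZT2 eT1X o1 o2 (lt_trans o3 o4)
  have hT3 : S T3 ≠ S X := hcr eZT3 eT1X o1 (lt_trans o2 o3) o4
  have slot : ∀ j : Fin 3, (T2 < c3 j ∧ c3 j < T3) ∨ (T3 < c3 j ∧ c3 j < X) := by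
    intro j
    have hne := n3 j
    rcases lt_trichotomy (c3 j) Z with h | h | h
    · have h1 := hcr (hs (e3T j)) eZY h (lt_trans o1 (lt_trans o2 o3)) (lt_trans o4 oXY)
      exact (bNe3 hT3 h1 hXY).elim
    · exact absurd h hne.1
    · rcases lt_trichotomy (c3 j) T2 with h2 | h2 | h2
      · exact ((hcr eZT2 (hs (e3T j)) h h2 o3) (bEq hT2 hT3)).elim
      · exact absurd h2 hne.2.1
      · rcases lt_trichotomy (c3 j) T3 with h3 | h3 | h3
        · exact Or.inl ⟨h2, h3⟩
        · exact absurd h3 hne.2.2.1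
        · rcases lt_trichotomy (c3 j) X with h4 | h4 | h4
          · exact Or.inr ⟨h3, h4⟩
          · exact absurd h4 hne.2.2.2.1
          · have hXG := hcr eZX (e3T j) (lt_trans o1 (lt_trans o2 o3)) o4 h4
            rcases lt_trichotomy (c3 j) Y with h5 | h5 | h5
            · have hGY := hcr (e3T j) eXY o4 h4 h5
              exact (bNe3 (Ne.symm hXG) hGY hXY).elim
            · exact absurd h5 hne.2.2.2.2
            · have hYG := hcr eZY (e3T j) (lt_trans o1 (lt_trans o2 o3))
                (lt_trans o4 oXY) h5
              exact (bNe3 (Ne.symm hXG) (Ne.symm hYG) hXY).elim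
  have banA : ∀ j j' : Fin 3, c3 j < c3 j' → T2 < c3 j →
      T2 < c3 j' → c3 j' < T3 → False := by
    intro j j' h12 hja hj'a hj'b
    have h1 := hcr (e3Z j') eT2X (lt_trans o1 o2) hj'a (lt_trans hj'b o4)
    have h2 := hcr (e3Z j') (hs (e3T j)) (lt_trans o1 (lt_trans o2 hja)) h12 hj'b
    exact bNe3 h2 h1 hT3
  have banB : ∀ j j' : Fin 3, c3 j < c3 j' → T3 < c3 j →
      c3 j < X → c3 j' < X → False := by
    intro j j' h12 hja hjb hj'b
    have h1 := hcr (e3Z j) eT2X (lt_trans o1 o2) (lt_trans o3 hja) hjb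
    have h2 := hcr (e3Z j') eT2X (lt_trans o1 o2) (lt_trans o3 (lt_trans hja h12)) hj'b
    have h3 := hcr (e3Z j) (e3T j') (lt_trans o1 (lt_trans o2 o3)) hja h12
    exact bNe3 h3 h1 h2
  obtain ⟨j1, j2, hj12, hjeq⟩ := pigeon32 (fun j => decide (T3 < c3 j))
  simp only [decide_eq_decide] at hjeq
  rcases slot j1 with sA1 | sB1 <;> rcases slot j2 with sA2 | sB2
  · rcases lt_trichotomy (c3 j1) (c3 j2) with h | h | h
    · exact banA j1 j2 h sA1.1 sA2.1 sA2.2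
    · exact i3 j1 j2 hj12 h
    · exact banA j2 j1 h sA2.1 sA1.1 sA1.2
  · exact absurd (hjeq.mpr sB2.1) (not_lt.mpr (le_of_lt sA1.2))
  · exact absurd (hjeq.mp sB1.1) (not_lt.mpr (le_of_lt sA2.2))
  · rcases lt_trichotomy (c3 j1) (c3 j2) with h | h | h
    · exact banB j1 j2 h sB1.1 sB1.2 sB2.2
    · exact i3 j1 j2 hj12 h
    · exact banB j2 j1 h sB2.1 sB2.2 sB1.2

/-- master for the y-edge of a left root-child: no three children in (Z,X). -/
lemma masterY
    (hs : ∀ {a b}, A a b → A b a)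
    (hcr : ∀ {a c b d}, A a b → A c d → a < c → c < b → b < d → S b ≠ S d)
    {Z0 Z X Y T1 T2 T3 : ℕ}
    (oZ0 : Z0 < Z) (oZX : Z < X) (oXY : X < Y)
    (o1 : Z < T1) (o2 : T1 < T2) (o3 : T2 < T3) (o4 : T3 < X)
    (eZX : A Z X) (eZ0Y : A Z0 Y)
    (hXY : S X ≠ S Y)
    (eZT2 : A Z T2) (eT1Y : A T1 Y) (eT2Y : A T2 Y)
    (eZT3 : A Z T3) (eT3Y : A T3 Y)
    (c3 : Fin 3 → ℕ)
    (e3Z : ∀ j, A Z (c3 j)) (e3T : ∀ j, A T3 (c3 j))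
    (i3 : ∀ j j' : Fin 3, j ≠ j' → c3 j ≠ c3 j')
    (n3 : ∀ j, c3 j ≠ Z ∧ c3 j ≠ T2 ∧ c3 j ≠ T3 ∧ c3 j ≠ X ∧ c3 j ≠ Y) :
    False := by
  have hT2 : S T2 ≠ S Y := hcr eZT2 eT1Y o1 o2 (lt_trans (lt_trans o3 o4) oXY)
  have hT3 : S T3 ≠ S Y := hcr eZT3 eT1Y o1 (lt_trans o2 o3) (lt_trans o4 oXY)
  have slot : ∀ j : Fin 3, (T2 < c3 j ∧ c3 j < T3) ∨ (T3 < c3 j ∧ c3 j < X) := by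
    intro j
    have hne := n3 j
    rcases lt_trichotomy (c3 j) Z with h | h | h
    · have h1 := hcr (hs (e3T j)) eZX h (lt_trans o1 (lt_trans o2 o3)) o4
      exact (bNe3 h1 hT3 hXY).elim
    · exact absurd h hne.1
    · rcases lt_trichotomy (c3 j) T2 with h2 | h2 | h2
      · exact ((hcr eZT2 (hs (e3T j)) h h2 o3) (bEq hT2 hT3)).elim
      · exact absurd h2 hne.2.1
      · rcases lt_trichotomy (c3 j) T3 with h3 | h3 | h3
        · exact Or.inl ⟨h2, h3⟩
        · exact absurd h3 hne.2.2.1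
        · rcases lt_trichotomy (c3 j) X with h4 | h4 | h4
          · exact Or.inr ⟨h3, h4⟩
          · exact absurd h4 hne.2.2.2.1
          · have hXG := hcr eZX (e3T j) (lt_trans o1 (lt_trans o2 o3)) o4 h4
            rcases lt_trichotomy (c3 j) Y with h5 | h5 | h5
            · have hGY := hcr (e3Z j) eT2Y (lt_trans o1 o2)
                (lt_trans o3 (lt_trans o4 h4)) h5
              exact (bNe3 (Ne.symm hXG) hGY hXY).elim
            · exact absurd h5 hne.2.2.2.2
            · have hYG := hcr eZ0Y (e3T j)
                (lt_trans oZ0 (lt_trans o1 (lt_trans o2 o3)))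
                (lt_trans o4 oXY) h5
              exact (bNe3 (Ne.symm hXG) (Ne.symm hYG) hXY).elim
  have banA : ∀ j j' : Fin 3, c3 j < c3 j' → T2 < c3 j →
      T2 < c3 j' → c3 j' < T3 → False := by
    intro j j' h12 hja hj'a hj'b
    have h1 := hcr (e3Z j') eT2Y (lt_trans o1 o2) hj'a (lt_trans hj'b (lt_trans o4 oXY))
    have h2 := hcr (e3Z j') (hs (e3T j)) (lt_trans o1 (lt_trans o2 hja)) h12 hj'b
    exact bNe3 h2 h1 hT3
  have banB : ∀ j j' : Fin 3, c3 j < c3 j' → T3 < c3 j →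
      c3 j < X → c3 j' < X → False := by
    intro j j' h12 hja hjb hj'b
    have h1 := hcr (e3Z j) eT2Y (lt_trans o1 o2) (lt_trans o3 hja) (lt_trans hjb oXY)
    have h2 := hcr (e3Z j') eT2Y (lt_trans o1 o2) (lt_trans o3 (lt_trans hja h12))
      (lt_trans hj'b oXY)
    have h3 := hcr (e3Z j) (e3T j') (lt_trans o1 (lt_trans o2 o3)) hja h12
    exact bNe3 h3 h1 h2
  obtain ⟨j1, j2, hj12, hjeq⟩ := pigeon32 (fun j => decide (T3 < c3 j))
  simp only [decide_eq_decide] at hjeq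
  rcases slot j1 with sA1 | sB1 <;> rcases slot j2 with sA2 | sB2
  · rcases lt_trichotomy (c3 j1) (c3 j2) with h | h | h
    · exact banA j1 j2 h sA1.1 sA2.1 sA2.2
    · exact i3 j1 j2 hj12 h
    · exact banA j2 j1 h sA2.1 sA1.1 sA1.2
  · exact absurd (hjeq.mpr sB2.1) (not_lt.mpr (le_of_lt sA1.2))
  · exact absurd (hjeq.mp sB1.1) (not_lt.mpr (le_of_lt sA2.2))
  · rcases lt_trichotomy (c3 j1) (c3 j2) with h | h | h
    · exact banB j1 j2 h sB1.1 sB1.2 sB2.2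
    · exact i3 j1 j2 hj12 h
    · exact banB j2 j1 h sB2.1 sB2.2 sB1.2

/-- no two (X,Y)-children on the y-edge of a left root-child. -/
lemma xyPair
    (hs : ∀ {a b}, A a b → A b a)
    (hcr : ∀ {a c b d}, A a b → A c d → a < c → c < b → b < d → S b ≠ S d)
    {Z X Y Q1 Q2 : ℕ}
    (oZX : Z < X) (oQ1 : X < Q1) (oQ12 : Q1 < Q2) (oQ2Y : Q2 < Y)
    (eZX : A Z X) (eXY : A X Y)
    (hXY : S X ≠ S Y)
    (eZQ1 : A Z Q1) (eZQ2 : A Z Q2) (eQ1Y : A Q1 Y) (eQ2Y : A Q2 Y)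
    (c3 : Fin 3 → ℕ)
    (e3Z : ∀ j, A Z (c3 j)) (e3Q : ∀ j, A Q1 (c3 j))
    (i3 : ∀ j j' : Fin 3, j ≠ j' → c3 j ≠ c3 j')
    (n3 : ∀ j, c3 j ≠ Z ∧ c3 j ≠ X ∧ c3 j ≠ Q1 ∧ c3 j ≠ Q2 ∧ c3 j ≠ Y) :
    False := by
  have hQ1 : S Q1 ≠ S Y := hcr eZQ1 eXY oZX oQ1 (lt_trans oQ12 oQ2Y)
  have hQ2 : S Q2 ≠ S Y := hcr eZQ2 eXY oZX (lt_trans oQ1 oQ12) oQ2Y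
  have slot : ∀ j : Fin 3, (X < c3 j ∧ c3 j < Q1) ∨ (Q1 < c3 j ∧ c3 j < Q2) := by
    intro j
    have hne := n3 j
    rcases lt_trichotomy (c3 j) Z with h | h | h
    · exact ((hcr (hs (e3Q j)) eZQ2 h (lt_trans oZX oQ1) oQ12) (bEq hQ1 hQ2)).elim
    · exact absurd h hne.1
    · rcases lt_trichotomy (c3 j) X with h2 | h2 | h2
      · have h1 := hcr eZX (hs (e3Q j)) h h2 oQ1
        exact (bNe3 hQ1 (fun hh => h1 hh.symm) hXY.symm).elim
      · exact absurd h2 hne.2.1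
      · rcases lt_trichotomy (c3 j) Q1 with h3 | h3 | h3
        · exact Or.inl ⟨h2, h3⟩
        · exact absurd h3 hne.2.2.1
        · rcases lt_trichotomy (c3 j) Q2 with h4 | h4 | h4
          · exact Or.inr ⟨h3, h4⟩
          · exact absurd h4 hne.2.2.2.1
          · have hGb := hcr eZQ2 (e3Q j) (lt_trans oZX oQ1) oQ12 h4
            rcases lt_trichotomy (c3 j) Y with h5 | h5 | h5
            · have hGa := hcr (e3Z j) eQ2Y (lt_trans oZX (lt_trans oQ1 oQ12)) h4 h5
              exact (bNe3 (Ne.symm hGb) hGa hQ2).elim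
            · exact absurd h5 hne.2.2.2.2
            · have hYG := hcr eXY (e3Q j) oQ1 (lt_trans oQ12 oQ2Y) h5
              exact (bNe3 (Ne.symm hGb) (Ne.symm hYG) hQ2).elim
  have banA : ∀ j j' : Fin 3, c3 j < c3 j' → X < c3 j →
      X < c3 j' → c3 j' < Q1 → False := by
    intro j j' h12 hja hj'a hj'b
    have h1 := hcr (e3Z j') eXY oZX hj'a (lt_trans hj'b (lt_trans oQ12 oQ2Y))
    have h2 := hcr (e3Z j') (hs (e3Q j)) (lt_trans oZX hja) h12 hj'b
    exact bNe3 h2 h1 hQ1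
  have banB : ∀ j j' : Fin 3, c3 j < c3 j' → Q1 < c3 j →
      c3 j < Q2 → c3 j' < Q2 → False := by
    intro j j' h12 hja hjb hj'b
    have h1 := hcr (e3Z j) eXY oZX (lt_trans oQ1 hja) (lt_trans hjb oQ2Y)
    have h2 := hcr (e3Z j') eXY oZX (lt_trans oQ1 (lt_trans hja h12))
      (lt_trans hj'b oQ2Y)
    have h3 := hcr (e3Z j) (e3Q j') (lt_trans oZX oQ1) hja h12
    exact bNe3 h3 h1 h2
  obtain ⟨j1, j2, hj12, hjeq⟩ := pigeon32 (fun j => decide (Q1 < c3 j))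
  simp only [decide_eq_decide] at hjeq
  rcases slot j1 with sA1 | sB1 <;> rcases slot j2 with sA2 | sB2
  · rcases lt_trichotomy (c3 j1) (c3 j2) with h | h | h
    · exact banA j1 j2 h sA1.1 sA2.1 sA2.2
    · exact i3 j1 j2 hj12 h
    · exact banA j2 j1 h sA2.1 sA1.1 sA1.2
  · exact absurd (hjeq.mpr sB2.1) (not_lt.mpr (le_of_lt sA1.2))
  · exact absurd (hjeq.mp sB1.1) (not_lt.mpr (le_of_lt sA2.2))
  · rcases lt_trichotomy (c3 j1) (c3 j2) with h | h | h
    · exact banB j1 j2 h sB1.1 sB1.2 sB2.2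
    · exact i3 j1 j2 hj12 h
    · exact banB j2 j1 h sB2.1 sB2.2 sB1.2

/-- the x-edge of a left root-child forces the child's colour. -/
lemma leftB1
    (hs : ∀ {a b}, A a b → A b a)
    (hcr : ∀ {a c b d}, A a b → A c d → a < c → c < b → b < d → S b ≠ S d)
    {Z1 Z X Y : ℕ}
    (oZ1 : Z1 < Z) (oZX : Z < X) (oXY : X < Y)
    (eZ1Y : A Z1 Y) (eZX : A Z X) (eZY : A Z Y) (eXY : A X Y)
    (hXY : S X ≠ S Y)
    (c5 : Fin 5 → ℕ) (e5Z : ∀ k, A Z (c5 k)) (e5X : ∀ k, A X (c5 k))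
    (i5 : ∀ k k' : Fin 5, k ≠ k' → c5 k ≠ c5 k')
    (n5 : ∀ k, c5 k ≠ Z ∧ c5 k ≠ X ∧ c5 k ≠ Y)
    (c3 : Fin 5 → Fin 3 → ℕ)
    (e3Z : ∀ k j, A Z (c3 k j)) (e3T : ∀ k j, A (c5 k) (c3 k j))
    (i3 : ∀ k (j j' : Fin 3), j ≠ j' → c3 k j ≠ c3 k j')
    (n3 : ∀ k j, c3 k j ≠ Z ∧ c3 k j ≠ X ∧ c3 k j ≠ Y ∧ ∀ k', c3 k j ≠ c5 k') :
    S Z ≠ S X := by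
  have hRc : ∀ k, X < c5 k → S (c5 k) ≠ S Y := by
    intro k h
    rcases lt_trichotomy (c5 k) Y with h' | h' | h'
    · exact hcr (e5Z k) eXY oZX h h'
    · exact absurd h' (n5 k).2.2
    · exact (hcr eZ1Y (e5Z k) oZ1 (lt_trans oZX oXY) h').symm
  have hR1 : ∀ k k', k ≠ k' → X < c5 k → X < c5 k' → False := by
    intro k k' hkk h h'
    rcases lt_trichotomy (c5 k) (c5 k') with hlt | heq | hgt
    · exact (hcr (e5Z k) (e5X k') oZX h hlt) (bEq (hRc k h) (hRc k' h'))
    · exact i5 k k' hkk heq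
    · exact (hcr (e5Z k') (e5X k) oZX h' hgt) (bEq (hRc k' h') (hRc k h))
  set zf : Fin 5 → Fin 3 :=
    (fun k => if c5 k < Z then 0 else if c5 k < X then 1 else 2) with hzf
  have zv0 : ∀ m : Fin 5, zf m = 0 → c5 m < Z := by
    intro m h
    rw [hzf] at h; dsimp only at h
    by_cases h1 : c5 m < Z
    · exact h1
    · rw [if_neg h1] at h
      by_cases h2 : c5 m < X
      · rw [if_pos h2] at h; exact absurd h (by decide)
      · rw [if_neg h2] at h; exact absurd h (by decide)
  have zv1 : ∀ m : Fin 5, zf m = 1 → Z < c5 m ∧ c5 m < X := by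
    intro m h
    rw [hzf] at h; dsimp only at h
    by_cases h1 : c5 m < Z
    · rw [if_pos h1] at h; exact absurd h (by decide)
    · rw [if_neg h1] at h
      by_cases h2 : c5 m < X
      · have := (n5 m).1; omega
      · rw [if_neg h2] at h; exact absurd h (by decide)
  have zv2 : ∀ m : Fin 5, zf m = 2 → X < c5 m := by
    intro m h
    rw [hzf] at h; dsimp only at h
    by_cases h1 : c5 m < Z
    · rw [if_pos h1] at h; exact absurd h (by decide)
    · rw [if_neg h1] at h
      by_cases h2 : c5 m < X
      · rw [if_pos h2] at h; exact absurd h (by decide)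
      · have := (n5 m).2.1; omega
  obtain ⟨i, j, hij, hi, hj⟩ := pigeon53 zf
    (by
      rintro ⟨i, j, k, hij, hik, hjk, hi, hj, hk⟩
      have q1 := zv1 i hi
      have q2 := zv1 j hj
      have q3 := zv1 k hk
      obtain ⟨p, q, r, hp, hq, hr, s1, s2⟩ := sort3 c5
        (fun m => Z < c5 m ∧ c5 m < X) q1 q2 q3
        (i5 i j hij) (i5 i k hik) (i5 j k hjk)
      exact masterX hs hcr oZX oXY hp.1 s1 s2 hr.2 eZX eZY eXY hXY
        (e5Z q) (hs (e5X p)) (hs (e5X q)) (e5Z r) (hs (e5X r)) (c3 r) (e3Z r) (e3T r)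
        (i3 r) (fun jj => ⟨(n3 r jj).1, (n3 r jj).2.2.2 q, (n3 r jj).2.2.2 r,
          (n3 r jj).2.1, (n3 r jj).2.2.1⟩))
    (by
      rintro ⟨i, j, hij, hi, hj⟩
      exact hR1 i j hij (zv2 i hi) (zv2 j hj))
  have hzi := zv0 i hi
  have hzj := zv0 j hj
  rcases lt_trichotomy (c5 i) (c5 j) with hlt | heq | hgt
  · exact hcr (hs (e5Z i)) (hs (e5X j)) hlt hzj oZX
  · exact absurd heq (i5 i j hij)
  · exact hcr (hs (e5Z j)) (hs (e5X i)) hgt hzi oZX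

/-- the y-edge of a left root-child (whose colour is forced) must have an (X,Y)-child
and a beyond-Y child. -/
lemma leftB2
    (hs : ∀ {a b}, A a b → A b a)
    (hcr : ∀ {a c b d}, A a b → A c d → a < c → c < b → b < d → S b ≠ S d)
    {Z1 Z X Y : ℕ}
    (oZ1 : Z1 < Z) (oZX : Z < X) (oXY : X < Y)
    (eZ1Y : A Z1 Y) (eZX : A Z X) (eXY : A X Y)
    (hXY : S X ≠ S Y) (hZX : S Z ≠ S X)
    (c5 : Fin 5 → ℕ) (e5Z : ∀ k, A Z (c5 k)) (e5Y : ∀ k, A Y (c5 k))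
    (i5 : ∀ k k' : Fin 5, k ≠ k' → c5 k ≠ c5 k')
    (n5 : ∀ k, c5 k ≠ Z ∧ c5 k ≠ X ∧ c5 k ≠ Y)
    (c3 : Fin 5 → Fin 3 → ℕ)
    (e3Z : ∀ k j, A Z (c3 k j)) (e3T : ∀ k j, A (c5 k) (c3 k j))
    (i3 : ∀ k (j j' : Fin 3), j ≠ j' → c3 k j ≠ c3 k j')
    (n3 : ∀ k j, c3 k j ≠ Z ∧ c3 k j ≠ X ∧ c3 k j ≠ Y ∧ ∀ k', c3 k j ≠ c5 k') :
    ∃ k k', (X < c5 k ∧ c5 k < Y) ∧ Y < c5 k' := by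
  have hZY : S Z = S Y := bEq hZX (Ne.symm hXY)
  set zf : Fin 5 → Fin 4 :=
    (fun k => if c5 k < Z then 0 else if c5 k < X then 1 else if c5 k < Y then 2 else 3)
    with hzf
  have zv0 : ∀ m : Fin 5, zf m = 0 → c5 m < Z := by
    intro m h
    rw [hzf] at h; dsimp only at h
    by_cases h1 : c5 m < Z
    · exact h1
    · rw [if_neg h1] at h
      by_cases h2 : c5 m < X
      · rw [if_pos h2] at h; exact absurd h (by decide)
      · rw [if_neg h2] at h
        by_cases h3 : c5 m < Y
        · rw [if_pos h3] at h; exact absurd h (by decide)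
        · rw [if_neg h3] at h; exact absurd h (by decide)
  have zv1 : ∀ m : Fin 5, zf m = 1 → Z < c5 m ∧ c5 m < X := by
    intro m h
    rw [hzf] at h; dsimp only at h
    by_cases h1 : c5 m < Z
    · rw [if_pos h1] at h; exact absurd h (by decide)
    · rw [if_neg h1] at h
      by_cases h2 : c5 m < X
      · have := (n5 m).1; omega
      · rw [if_neg h2] at h
        by_cases h3 : c5 m < Y
        · rw [if_pos h3] at h; exact absurd h (by decide)
        · rw [if_neg h3] at h; exact absurd h (by decide)
  have zv2 : ∀ m : Fin 5, zf m = 2 → X < c5 m ∧ c5 m < Y := by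
    intro m h
    rw [hzf] at h; dsimp only at h
    by_cases h1 : c5 m < Z
    · rw [if_pos h1] at h; exact absurd h (by decide)
    · rw [if_neg h1] at h
      by_cases h2 : c5 m < X
      · rw [if_pos h2] at h; exact absurd h (by decide)
      · rw [if_neg h2] at h
        by_cases h3 : c5 m < Y
        · have := (n5 m).2.1; omega
        · rw [if_neg h3] at h; exact absurd h (by decide)
  have zv3 : ∀ m : Fin 5, zf m = 3 → Y < c5 m := by
    intro m h
    rw [hzf] at h; dsimp only at h
    by_cases h1 : c5 m < Z
    · rw [if_pos h1] at h; exact absurd h (by decide)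
    · rw [if_neg h1] at h
      by_cases h2 : c5 m < X
      · rw [if_pos h2] at h; exact absurd h (by decide)
      · rw [if_neg h2] at h
        by_cases h3 : c5 m < Y
        · rw [if_pos h3] at h; exact absurd h (by decide)
        · have := (n5 m).2.2; omega
  obtain ⟨⟨k2, hk2⟩, ⟨k3, hk3⟩⟩ := pigeon54 zf
    (by
      rintro ⟨i, j, hij, hi, hj⟩
      have hzi := zv0 i hi
      have hzj := zv0 j hj
      rcases lt_trichotomy (c5 i) (c5 j) with hlt | heq | hgt
      · exact (hcr (hs (e5Z i)) (hs (e5Y j)) hlt hzj (lt_trans oZX oXY)) hZY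
      · exact absurd heq (i5 i j hij)
      · exact (hcr (hs (e5Z j)) (hs (e5Y i)) hgt hzi (lt_trans oZX oXY)) hZY)
    (by
      rintro ⟨i, j, k, hij, hik, hjk, hi, hj, hk⟩
      have q1 := zv1 i hi
      have q2 := zv1 j hj
      have q3 := zv1 k hk
      obtain ⟨p, q, r, hp, hq, hr, s1, s2⟩ := sort3 c5
        (fun m => Z < c5 m ∧ c5 m < X) q1 q2 q3
        (i5 i j hij) (i5 i k hik) (i5 j k hjk)
      exact masterY hs hcr oZ1 oZX oXY hp.1 s1 s2 hr.2 eZX eZ1Y hXY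
        (e5Z q) (hs (e5Y p)) (hs (e5Y q)) (e5Z r) (hs (e5Y r)) (c3 r) (e3Z r) (e3T r)
        (i3 r) (fun jj => ⟨(n3 r jj).1, (n3 r jj).2.2.2 q, (n3 r jj).2.2.2 r,
          (n3 r jj).2.1, (n3 r jj).2.2.1⟩))
    (by
      rintro ⟨i, j, hij, hi, hj⟩
      have q1 := zv2 i hi
      have q2 := zv2 j hj
      rcases lt_trichotomy (c5 i) (c5 j) with hlt | heq | hgt
      · exact xyPair hs hcr oZX q1.1 hlt q2.2 eZX eXY hXY (e5Z i) (e5Z j)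
          (hs (e5Y i)) (hs (e5Y j)) (c3 i) (e3Z i) (e3T i) (i3 i)
          (fun jj => ⟨(n3 i jj).1, (n3 i jj).2.1, (n3 i jj).2.2.2 i,
            (n3 i jj).2.2.2 j, (n3 i jj).2.2.1⟩)
      · exact absurd heq (i5 i j hij)
      · exact xyPair hs hcr oZX q2.1 hgt q1.2 eZX eXY hXY (e5Z j) (e5Z i)
          (hs (e5Y j)) (hs (e5Y i)) (c3 j) (e3Z j) (e3T j) (i3 j)
          (fun jj => ⟨(n3 j jj).1, (n3 j jj).2.1, (n3 j jj).2.2.2 j,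
            (n3 j jj).2.2.2 i, (n3 j jj).2.2.1⟩))
    (by
      rintro ⟨i, j, hij, hi, hj⟩
      have q1 := zv3 i hi
      have q2 := zv3 j hj
      have hci : S (c5 i) ≠ S Y :=
        (hcr eZ1Y (e5Z i) oZ1 (lt_trans oZX oXY) q1).symm
      have hcj : S (c5 j) ≠ S Y :=
        (hcr eZ1Y (e5Z j) oZ1 (lt_trans oZX oXY) q2).symm
      rcases lt_trichotomy (c5 i) (c5 j) with hlt | heq | hgt
      · exact (hcr (e5Z i) (e5Y j) (lt_trans oZX oXY) q1 hlt) (bEq hci hcj)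
      · exact absurd heq (i5 i j hij)
      · exact (hcr (e5Z j) (e5Y i) (lt_trans oZX oXY) q2 hgt) (bEq hcj hci))
  exact ⟨k2, k3, zv2 k2 hk2, zv3 k3 hk3⟩

/-- the root analysis: contradiction. -/
lemma rootLemma
    (hs : ∀ {a b}, A a b → A b a)
    (hcr : ∀ {a c b d}, A a b → A c d → a < c → c < b → b < d → S b ≠ S d)
    {X Y : ℕ} (oXY : X < Y) (eXY : A X Y)
    (c7 : Fin 7 → ℕ) (e7X : ∀ m, A X (c7 m)) (e7Y : ∀ m, A Y (c7 m))
    (i7 : ∀ m m' : Fin 7, m ≠ m' → c7 m ≠ c7 m')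
    (n7 : ∀ m, c7 m ≠ X ∧ c7 m ≠ Y)
    (d5x : Fin 7 → Fin 5 → ℕ)
    (e5xa : ∀ m k, A X (d5x m k)) (e5xb : ∀ m k, A (c7 m) (d5x m k))
    (i5x : ∀ m (k k' : Fin 5), k ≠ k' → d5x m k ≠ d5x m k')
    (n5x : ∀ m k, d5x m k ≠ X ∧ d5x m k ≠ Y ∧ ∀ m', d5x m k ≠ c7 m')
    (d5y : Fin 7 → Fin 5 → ℕ)
    (e5ya : ∀ m k, A Y (d5y m k)) (e5yb : ∀ m k, A (c7 m) (d5y m k))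
    (i5y : ∀ m (k k' : Fin 5), k ≠ k' → d5y m k ≠ d5y m k')
    (n5y : ∀ m k, d5y m k ≠ X ∧ d5y m k ≠ Y ∧ ∀ m', d5y m k ≠ c7 m')
    (d3xx : Fin 7 → Fin 5 → Fin 3 → ℕ)
    (e3xxa : ∀ m k j, A X (d3xx m k j)) (e3xxb : ∀ m k j, A (d5x m k) (d3xx m k j))
    (i3xx : ∀ m k (j j' : Fin 3), j ≠ j' → d3xx m k j ≠ d3xx m k j')
    (n3xx : ∀ m k j, d3xx m k j ≠ X ∧ d3xx m k j ≠ Y ∧ (∀ m', d3xx m k j ≠ c7 m') ∧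
      ∀ k', d3xx m k j ≠ d5x m k')
    (d3zx : Fin 7 → Fin 5 → Fin 3 → ℕ)
    (e3zxa : ∀ m k j, A (c7 m) (d3zx m k j)) (e3zxb : ∀ m k j, A (d5x m k) (d3zx m k j))
    (i3zx : ∀ m k (j j' : Fin 3), j ≠ j' → d3zx m k j ≠ d3zx m k j')
    (n3zx : ∀ m k j, d3zx m k j ≠ X ∧ d3zx m k j ≠ Y ∧ (∀ m', d3zx m k j ≠ c7 m') ∧
      ∀ k', d3zx m k j ≠ d5x m k')
    (d3zy : Fin 7 → Fin 5 → Fin 3 → ℕ)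
    (e3zya : ∀ m k j, A (c7 m) (d3zy m k j)) (e3zyb : ∀ m k j, A (d5y m k) (d3zy m k j))
    (i3zy : ∀ m k (j j' : Fin 3), j ≠ j' → d3zy m k j ≠ d3zy m k j')
    (n3zy : ∀ m k j, d3zy m k j ≠ X ∧ d3zy m k j ≠ Y ∧ (∀ m', d3zy m k j ≠ c7 m') ∧
      ∀ k', d3zy m k j ≠ d5y m k') :
    False := by
  set zf : Fin 7 → Fin 3 :=
    (fun m => if c7 m < X then 0 else if c7 m < Y then 1 else 2) with hzf
  have zv0 : ∀ m : Fin 7, zf m = 0 → c7 m < X := by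
    intro m h
    rw [hzf] at h; dsimp only at h
    by_cases h1 : c7 m < X
    · exact h1
    · rw [if_neg h1] at h
      by_cases h2 : c7 m < Y
      · rw [if_pos h2] at h; exact absurd h (by decide)
      · rw [if_neg h2] at h; exact absurd h (by decide)
  have zv1 : ∀ m : Fin 7, zf m = 1 → X < c7 m ∧ c7 m < Y := by
    intro m h
    rw [hzf] at h; dsimp only at h
    by_cases h1 : c7 m < X
    · rw [if_pos h1] at h; exact absurd h (by decide)
    · rw [if_neg h1] at h
      by_cases h2 : c7 m < Y
      · have := (n7 m).1; omega
      · rw [if_neg h2] at h; exact absurd h (by decide)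
  have zv2 : ∀ m : Fin 7, zf m = 2 → Y < c7 m := by
    intro m h
    rw [hzf] at h; dsimp only at h
    by_cases h1 : c7 m < X
    · rw [if_pos h1] at h; exact absurd h (by decide)
    · rw [if_neg h1] at h
      by_cases h2 : c7 m < Y
      · rw [if_pos h2] at h; exact absurd h (by decide)
      · have := (n7 m).2; omega
  obtain ⟨m1, m2, m3, h12, h13, h23, e12, e23⟩ := pigeon73 zf
  by_cases hz0 : zf m1 = 0
  · -- three left children
    have q1 := zv0 m1 hz0
    have q2 := zv0 m2 (e12 ▸ hz0)
    have q3 := zv0 m3 (e23 ▸ e12 ▸ hz0)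
    obtain ⟨p, q, r, hp, hq, hr, s1, s2⟩ := sort3 c7 (fun m => c7 m < X) q1 q2 q3
      (i7 m1 m2 h12) (i7 m1 m3 h13) (i7 m2 m3 h23)
    have hXY : S X ≠ S Y := hcr (hs (e7X p)) (hs (e7Y q)) s1 hq oXY
    have hZ2 : S (c7 q) ≠ S X :=
      leftB1 hs hcr s1 hq oXY (hs (e7Y p)) (hs (e7X q)) (hs (e7Y q)) eXY hXY
        (d5x q) (e5xb q) (e5xa q) (i5x q)
        (fun k => ⟨(n5x q k).2.2 q, (n5x q k).1, (n5x q k).2.1⟩)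
        (d3zx q) (e3zxa q) (e3zxb q) (i3zx q)
        (fun k j => ⟨(n3zx q k j).2.2.1 q, (n3zx q k j).1, (n3zx q k j).2.1,
          (n3zx q k j).2.2.2⟩)
    have hZ3 : S (c7 r) ≠ S X :=
      leftB1 hs hcr (lt_trans s1 s2) hr oXY (hs (e7Y p)) (hs (e7X r)) (hs (e7Y r))
        eXY hXY
        (d5x r) (e5xb r) (e5xa r) (i5x r)
        (fun k => ⟨(n5x r k).2.2 r, (n5x r k).1, (n5x r k).2.1⟩)
        (d3zx r) (e3zxa r) (e3zxb r) (i3zx r)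
        (fun k j => ⟨(n3zx r k j).2.2.1 r, (n3zx r k j).1, (n3zx r k j).2.1,
          (n3zx r k j).2.2.2⟩)
    obtain ⟨kq, _, hkq, _⟩ :=
      leftB2 hs hcr s1 hq oXY (hs (e7Y p)) (hs (e7X q)) eXY hXY hZ2
        (d5y q) (e5yb q) (e5ya q) (i5y q)
        (fun k => ⟨(n5y q k).2.2 q, (n5y q k).1, (n5y q k).2.1⟩)
        (d3zy q) (e3zya q) (e3zyb q) (i3zy q)
        (fun k j => ⟨(n3zy q k j).2.2.1 q, (n3zy q k j).1, (n3zy q k j).2.1,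
          (n3zy q k j).2.2.2⟩)
    obtain ⟨_, kr, _, hkr⟩ :=
      leftB2 hs hcr (lt_trans s1 s2) hr oXY (hs (e7Y p)) (hs (e7X r)) eXY hXY hZ3
        (d5y r) (e5yb r) (e5ya r) (i5y r)
        (fun k => ⟨(n5y r k).2.2 r, (n5y r k).1, (n5y r k).2.1⟩)
        (d3zy r) (e3zya r) (e3zyb r) (i3zy r)
        (fun k j => ⟨(n3zy r k j).2.2.1 r, (n3zy r k j).1, (n3zy r k j).2.1,
          (n3zy r k j).2.2.2⟩)
    have h1 : S (d5y q kq) ≠ S Y := hcr (e5yb q kq) eXY hq hkq.1 hkq.2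
    have h2 : S (d5y r kr) ≠ S Y :=
      (hcr (hs (e7Y p)) (e5yb r kr) (lt_trans s1 s2) (lt_trans hr oXY) hkr).symm
    have h3 : S (d5y q kq) ≠ S (d5y r kr) :=
      hcr (e5yb q kq) (e5yb r kr) s2 (lt_trans hr hkq.1) (lt_trans hkq.2 hkr)
    exact bNe3 h3 h1 h2
  · by_cases hz1 : zf m1 = 1
    · -- three middle children
      have q1 := zv1 m1 hz1
      have q2 := zv1 m2 (e12 ▸ hz1)
      have q3 := zv1 m3 (e23 ▸ e12 ▸ hz1)
      obtain ⟨p, q, r, hp, hq, hr, s1, s2⟩ := sort3 c7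
        (fun m => X < c7 m ∧ c7 m < Y) q1 q2 q3
        (i7 m1 m2 h12) (i7 m1 m3 h13) (i7 m2 m3 h23)
      exact caseA hs hcr hp.1 s1 s2 hr.2 eXY (e7X q) (hs (e7Y q)) (e7X r)
        (hs (e7Y p))
        (d5x q) (e5xa q) (e5xb q) (i5x q)
        (fun k => ⟨(n5x q k).1, (n5x q k).2.2 p, (n5x q k).2.2 q, (n5x q k).2.2 r,
          (n5x q k).2.1⟩)
        (d3xx q) (e3xxa q) (e3xxb q) (i3xx q)
        (fun k j => ⟨(n3xx q k j).1, (n3xx q k j).2.1, (n3xx q k j).2.2.1 q,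
          (n3xx q k j).2.2.2⟩)
    · -- three right children
      have hz2 : zf m1 = 2 := by
        have hlt := (zf m1).isLt
        have h0 : (zf m1).val ≠ 0 := fun h => hz0 (Fin.ext h)
        have h1 : (zf m1).val ≠ 1 := fun h => hz1 (Fin.ext h)
        exact Fin.ext (by omega)
      have q1 := zv2 m1 hz2
      have q2 := zv2 m2 (e12 ▸ hz2)
      have q3 := zv2 m3 (e23 ▸ e12 ▸ hz2)
      obtain ⟨p, q, r, hp, hq, hr, s1, s2⟩ := sort3 c7 (fun m => Y < c7 m) q1 q2 q3
        (i7 m1 m2 h12) (i7 m1 m3 h13) (i7 m2 m3 h23)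
      have hpq := hcr (e7X p) (e7Y q) oXY hp s1
      have hpr := hcr (e7X p) (e7Y r) oXY hp (lt_trans s1 s2)
      have hqr := hcr (e7X q) (e7Y r) oXY hq s2
      exact bNe3 hpq hpr hqr

end Comb

/-! ### reduction to position space -/

def mpos (σ : Equiv.Perm (Fin 499)) (i : ℕ) : ℕ :=
  if h : i < 499 then (σ.symm ⟨i, h⟩ : Fin 499).val else 0

def Apos (σ : Equiv.Perm (Fin 499)) (p q : ℕ) : Prop :=
  ∃ (hp : p < 499) (hq : q < 499), (Gf 499).Adj (σ ⟨p, hp⟩) (σ ⟨q, hq⟩)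

open Classical in
noncomputable def Spos (σ : Equiv.Perm (Fin 499)) (page : Fin 499 → Fin 499 → Bool)
    (j : ℕ) : Bool :=
  if hj : j < 499 then
    (if h : ∃ i : Fin 499, (Gf 499).Adj (σ i) (σ ⟨j, hj⟩) ∧ i.val + 1 < j then
      page h.choose ⟨j, hj⟩ else true)
  else true

lemma Apos_symm {σ : Equiv.Perm (Fin 499)} {p q : ℕ} (h : Apos σ p q) : Apos σ q p := by
  obtain ⟨hp, hq, h⟩ := h
  exact ⟨hq, hp, h.symm⟩

lemma Spos_page {σ : Equiv.Perm (Fin 499)} {page : Fin 499 → Fin 499 → Bool}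
    (hO : ∀ j i i' : Fin 499, (Gf 499).Adj (σ i) (σ j) → (Gf 499).Adj (σ i') (σ j) →
      i.val + 1 < j.val → i'.val + 1 < j.val → page i j = page i' j)
    (i j : Fin 499) (hadj : (Gf 499).Adj (σ i) (σ j)) (hlt : i.val + 1 < j.val) :
    page i j = Spos σ page j.val := by
  unfold Spos
  rw [dif_pos j.isLt]
  have hex : ∃ i' : Fin 499, (Gf 499).Adj (σ i') (σ ⟨j.val, j.isLt⟩) ∧ i'.val + 1 < j.val := by
    refine ⟨i, ?_, hlt⟩
    convert hadj using 2
  rw [dif_pos hex]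
  obtain ⟨hadj', hlt'⟩ := hex.choose_spec
  exact hO j i hex.choose hadj hadj' hlt hlt'

lemma Apos_cross {σ : Equiv.Perm (Fin 499)} {page : Fin 499 → Fin 499 → Bool}
    (hC : ∀ a b c d : Fin 499, (Gf 499).Adj (σ a) (σ b) → (Gf 499).Adj (σ c) (σ d) →
      a < c → c < b → b < d → page a b ≠ page c d)
    (hO : ∀ j i i' : Fin 499, (Gf 499).Adj (σ i) (σ j) → (Gf 499).Adj (σ i') (σ j) →
      i.val + 1 < j.val → i'.val + 1 < j.val → page i j = page i' j)
    {a c b d : ℕ} (hab : Apos σ a b) (hcd : Apos σ c d)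
    (h1 : a < c) (h2 : c < b) (h3 : b < d) :
    Spos σ page b ≠ Spos σ page d := by
  obtain ⟨ha, hb, hab⟩ := hab
  obtain ⟨hc, hd, hcd⟩ := hcd
  have key := hC ⟨a, ha⟩ ⟨b, hb⟩ ⟨c, hc⟩ ⟨d, hd⟩ hab hcd
    (by simpa [Fin.mk_lt_mk] using h1) (by simpa [Fin.mk_lt_mk] using h2)
    (by simpa [Fin.mk_lt_mk] using h3)
  have e1 : page ⟨a, ha⟩ ⟨b, hb⟩ = Spos σ page b :=
    Spos_page hO _ _ hab (by simp; omega)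
  have e2 : page ⟨c, hc⟩ ⟨d, hd⟩ = Spos σ page d :=
    Spos_page hO _ _ hcd (by simp; omega)
  rw [e1, e2] at key
  exact key

lemma Apos_of_nrel (σ : Equiv.Perm (Fin 499)) {i j : ℕ} (hi : i < 499) (hj : j < 499)
    (h : nrel i j) : Apos σ (mpos σ i) (mpos σ j) := by
  unfold Apos mpos
  rw [dif_pos hi, dif_pos hj]
  refine ⟨(σ.symm ⟨i, hi⟩).isLt, (σ.symm ⟨j, hj⟩).isLt, ?_⟩
  have e1 : (⟨(σ.symm ⟨i, hi⟩ : Fin 499).val, (σ.symm ⟨i, hi⟩).isLt⟩ : Fin 499)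
      = σ.symm ⟨i, hi⟩ := by ext; rfl
  have e2 : (⟨(σ.symm ⟨j, hj⟩ : Fin 499).val, (σ.symm ⟨j, hj⟩).isLt⟩ : Fin 499)
      = σ.symm ⟨j, hj⟩ := by ext; rfl
  rw [e1, e2, Equiv.apply_symm_apply, Equiv.apply_symm_apply]
  rw [Gf_adj]
  constructor
  · have := nrel_lt h
    simp [Fin.ext_iff]
    omega
  · exact Or.inl h

lemma mpos_inj {σ : Equiv.Perm (Fin 499)} {i j : ℕ} (hi : i < 499) (hj : j < 499)
    (h : i ≠ j) : mpos σ i ≠ mpos σ j := by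
  unfold mpos
  rw [dif_pos hi, dif_pos hj]
  intro hh
  have : σ.symm ⟨i, hi⟩ = σ.symm ⟨j, hj⟩ := by ext; exact hh
  have := σ.symm.injective this
  rw [Fin.mk.injEq] at this
  exact h this

lemma kid1_inj {x c k k' : ℕ} (h : k ≠ k') : kid1 x c k ≠ kid1 x c k' := by
  unfold kid1; omega

lemma kid2_inj {t r k k' : ℕ} (h : k ≠ k') : kid2 t r k ≠ kid2 t r k' := by
  unfold kid2; omega

theorem final_contradiction (σ : Equiv.Perm (Fin 499)) (page : Fin 499 → Fin 499 → Bool)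
    (hC : ∀ a b c d : Fin 499, (Gf 499).Adj (σ a) (σ b) → (Gf 499).Adj (σ c) (σ d) →
      a < c → c < b → b < d → page a b ≠ page c d)
    (hO : ∀ j i i' : Fin 499, (Gf 499).Adj (σ i) (σ j) → (Gf 499).Adj (σ i') (σ j) →
      i.val + 1 < j.val → i'.val + 1 < j.val → page i j = page i' j)
    (x y : ℕ) (hx : x < 2) (hy : y < 2) (hxy : x ≠ y)
    (hpos : mpos σ x < mpos σ y) : False := by
  set A : ℕ → ℕ → Prop := Apos σ with hA
  set S : ℕ → Bool := Spos σ page with hS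
  have hs : ∀ {a b}, A a b → A b a := fun h => Apos_symm h
  have hcr : ∀ {a c b d}, A a b → A c d → a < c → c < b → b < d → S b ≠ S d :=
    fun h1 h2 h3 h4 h5 => Apos_cross hC hO h1 h2 h3 h4 h5
  -- id-level structure
  have hrootn : nrel x y ∨ nrel y x := by
    rcases (show (x = 0 ∧ y = 1) ∨ (x = 1 ∧ y = 0) by omega) with ⟨h1, h2⟩ | ⟨h1, h2⟩
    · subst h1; subst h2; exact Or.inl (Or.inl ⟨rfl, rfl⟩)
    · subst h1; subst h2; exact Or.inr (Or.inl ⟨rfl, rfl⟩)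
  have eXY : A (mpos σ x) (mpos σ y) := by
    rcases hrootn with h | h
    · exact Apos_of_nrel σ (by omega) (by omega) h
    · exact hs (Apos_of_nrel σ (by omega) (by omega) h)
  have hcn : ∀ m : Fin 7, nrel x (2 + m.val) ∧ nrel y (2 + m.val) := by
    intro m
    have h := nrel_root (c := 2 + m.val) (by omega) (by omega)
    rcases (show (x = 0 ∧ y = 1) ∨ (x = 1 ∧ y = 0) by omega) with ⟨h1, h2⟩ | ⟨h1, h2⟩ <;>
      (subst h1; subst h2)
    · exact h
    · exact ⟨h.2, h.1⟩
  -- children families (ids)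
  have hk1x : ∀ (m : Fin 7) (k : Fin 5),
      par (kid1 x (2 + m.val) k.val) = (x, 2 + m.val) ∧
        9 ≤ kid1 x (2 + m.val) k.val ∧ kid1 x (2 + m.val) k.val ≤ 78 :=
    fun m k => kid1_par hx (by omega) (by omega) k.isLt
  have hk1y : ∀ (m : Fin 7) (k : Fin 5),
      par (kid1 y (2 + m.val) k.val) = (y, 2 + m.val) ∧
        9 ≤ kid1 y (2 + m.val) k.val ∧ kid1 y (2 + m.val) k.val ≤ 78 :=
    fun m k => kid1_par hy (by omega) (by omega) k.isLt
  have hn1x : ∀ (m : Fin 7) (k : Fin 5),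
      nrel x (kid1 x (2 + m.val) k.val) ∧ nrel (2 + m.val) (kid1 x (2 + m.val) k.val) :=
    fun m k => nrel_kid1 hx (by omega) (by omega) k.isLt
  have hn1y : ∀ (m : Fin 7) (k : Fin 5),
      nrel y (kid1 y (2 + m.val) k.val) ∧ nrel (2 + m.val) (kid1 y (2 + m.val) k.val) :=
    fun m k => nrel_kid1 hy (by omega) (by omega) k.isLt
  have hn2xx : ∀ (m : Fin 7) (k : Fin 5) (j : Fin 3),
      nrel x (kid2 (kid1 x (2 + m.val) k.val) 0 j.val) ∧
      nrel (kid1 x (2 + m.val) k.val) (kid2 (kid1 x (2 + m.val) k.val) 0 j.val) :=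
    fun m k j => (nrel_kid2 hx (by omega) (by omega) (hk1x m k).1
      (hk1x m k).2.1 (hk1x m k).2.2 j.isLt).1
  have hn2zx : ∀ (m : Fin 7) (k : Fin 5) (j : Fin 3),
      nrel (2 + m.val) (kid2 (kid1 x (2 + m.val) k.val) 1 j.val) ∧
      nrel (kid1 x (2 + m.val) k.val) (kid2 (kid1 x (2 + m.val) k.val) 1 j.val) :=
    fun m k j => (nrel_kid2 hx (by omega) (by omega) (hk1x m k).1
      (hk1x m k).2.1 (hk1x m k).2.2 j.isLt).2
  have hn2zy : ∀ (m : Fin 7) (k : Fin 5) (j : Fin 3),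
      nrel (2 + m.val) (kid2 (kid1 y (2 + m.val) k.val) 1 j.val) ∧
      nrel (kid1 y (2 + m.val) k.val) (kid2 (kid1 y (2 + m.val) k.val) 1 j.val) :=
    fun m k j => (nrel_kid2 hy (by omega) (by omega) (hk1y m k).1
      (hk1y m k).2.1 (hk1y m k).2.2 j.isLt).2
  have hb2xx : ∀ (m : Fin 7) (k : Fin 5) (j : Fin 3),
      79 ≤ kid2 (kid1 x (2 + m.val) k.val) 0 j.val ∧
        kid2 (kid1 x (2 + m.val) k.val) 0 j.val ≤ 498 :=
    fun m k j => (kid2_par (hk1x m k).2.1 (hk1x m k).2.2 (by omega) j.isLt).2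
  have hb2zx : ∀ (m : Fin 7) (k : Fin 5) (j : Fin 3),
      79 ≤ kid2 (kid1 x (2 + m.val) k.val) 1 j.val ∧
        kid2 (kid1 x (2 + m.val) k.val) 1 j.val ≤ 498 :=
    fun m k j => (kid2_par (hk1x m k).2.1 (hk1x m k).2.2 (by omega) j.isLt).2
  have hb2zy : ∀ (m : Fin 7) (k : Fin 5) (j : Fin 3),
      79 ≤ kid2 (kid1 y (2 + m.val) k.val) 1 j.val ∧
        kid2 (kid1 y (2 + m.val) k.val) 1 j.val ≤ 498 :=
    fun m k j => (kid2_par (hk1y m k).2.1 (hk1y m k).2.2 (by omega) j.isLt).2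
  exact rootLemma hs hcr hpos eXY
    (fun m => mpos σ (2 + m.val))
    (fun m => Apos_of_nrel σ (by omega) (by omega) (hcn m).1)
    (fun m => Apos_of_nrel σ (by omega) (by omega) (hcn m).2)
    (fun m m' h => mpos_inj (by omega) (by omega)
      (by have := Fin.val_ne_of_ne h; omega))
    (fun m => ⟨mpos_inj (by omega) (by omega) (by omega),
      mpos_inj (by omega) (by omega) (by omega)⟩)
    (fun m k => mpos σ (kid1 x (2 + m.val) k.val))
    (fun m k => Apos_of_nrel σ (by omega) (by have := (hk1x m k).2; omega) (hn1x m k).1)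
    (fun m k => Apos_of_nrel σ (by omega) (by have := (hk1x m k).2; omega) (hn1x m k).2)
    (fun m k k' h => mpos_inj (by have := (hk1x m k).2; omega)
      (by have := (hk1x m k').2; omega)
      (kid1_inj (Fin.val_ne_of_ne h)))
    (fun m k => ⟨mpos_inj (by have := (hk1x m k).2; omega) (by omega)
        (by have := (hk1x m k).2; omega),
      mpos_inj (by have := (hk1x m k).2; omega) (by omega)
        (by have := (hk1x m k).2; omega),
      fun m' => mpos_inj (by have := (hk1x m k).2; omega) (by omega)
        (by have := (hk1x m k).2; omega)⟩)
    (fun m k => mpos σ (kid1 y (2 + m.val) k.val))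
    (fun m k => Apos_of_nrel σ (by omega) (by have := (hk1y m k).2; omega) (hn1y m k).1)
    (fun m k => Apos_of_nrel σ (by omega) (by have := (hk1y m k).2; omega) (hn1y m k).2)
    (fun m k k' h => mpos_inj (by have := (hk1y m k).2; omega)
      (by have := (hk1y m k').2; omega)
      (kid1_inj (Fin.val_ne_of_ne h)))
    (fun m k => ⟨mpos_inj (by have := (hk1y m k).2; omega) (by omega)
        (by have := (hk1y m k).2; omega),
      mpos_inj (by have := (hk1y m k).2; omega) (by omega)
        (by have := (hk1y m k).2; omega),
      fun m' => mpos_inj (by have := (hk1y m k).2; omega) (by omega)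
        (by have := (hk1y m k).2; omega)⟩)
    (fun m k j => mpos σ (kid2 (kid1 x (2 + m.val) k.val) 0 j.val))
    (fun m k j => Apos_of_nrel σ (by omega) (by have := (hb2xx m k j); omega)
      (hn2xx m k j).1)
    (fun m k j => Apos_of_nrel σ (by have := (hk1x m k).2; omega)
      (by have := (hb2xx m k j); omega) (hn2xx m k j).2)
    (fun m k j j' h => mpos_inj (by have := (hb2xx m k j); omega)
      (by have := (hb2xx m k j'); omega) (kid2_inj (Fin.val_ne_of_ne h)))
    (fun m k j => ⟨mpos_inj (by have := (hb2xx m k j); omega) (by omega)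
        (by have := (hb2xx m k j); omega),
      mpos_inj (by have := (hb2xx m k j); omega) (by omega)
        (by have := (hb2xx m k j); omega),
      fun m' => mpos_inj (by have := (hb2xx m k j); omega) (by omega)
        (by have := (hb2xx m k j); omega),
      fun k' => mpos_inj (by have := (hb2xx m k j); omega)
        (by have := (hk1x m k').2; omega)
        (by have := (hb2xx m k j); have := (hk1x m k').2; omega)⟩)
    (fun m k j => mpos σ (kid2 (kid1 x (2 + m.val) k.val) 1 j.val))
    (fun m k j => Apos_of_nrel σ (by omega) (by have := (hb2zx m k j); omega)
      (hn2zx m k j).1)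
    (fun m k j => Apos_of_nrel σ (by have := (hk1x m k).2; omega)
      (by have := (hb2zx m k j); omega) (hn2zx m k j).2)
    (fun m k j j' h => mpos_inj (by have := (hb2zx m k j); omega)
      (by have := (hb2zx m k j'); omega) (kid2_inj (Fin.val_ne_of_ne h)))
    (fun m k j => ⟨mpos_inj (by have := (hb2zx m k j); omega) (by omega)
        (by have := (hb2zx m k j); omega),
      mpos_inj (by have := (hb2zx m k j); omega) (by omega)
        (by have := (hb2zx m k j); omega),
      fun m' => mpos_inj (by have := (hb2zx m k j); omega) (by omega)
        (by have := (hb2zx m k j); omega),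
      fun k' => mpos_inj (by have := (hb2zx m k j); omega)
        (by have := (hk1x m k').2; omega)
        (by have := (hb2zx m k j); have := (hk1x m k').2; omega)⟩)
    (fun m k j => mpos σ (kid2 (kid1 y (2 + m.val) k.val) 1 j.val))
    (fun m k j => Apos_of_nrel σ (by omega) (by have := (hb2zy m k j); omega)
      (hn2zy m k j).1)
    (fun m k j => Apos_of_nrel σ (by have := (hk1y m k).2; omega)
      (by have := (hb2zy m k j); omega) (hn2zy m k j).2)
    (fun m k j j' h => mpos_inj (by have := (hb2zy m k j); omega)
      (by have := (hb2zy m k j'); omega) (kid2_inj (Fin.val_ne_of_ne h)))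
    (fun m k j => ⟨mpos_inj (by have := (hb2zy m k j); omega) (by omega)
        (by have := (hb2zy m k j); omega),
      mpos_inj (by have := (hb2zy m k j); omega) (by omega)
        (by have := (hb2zy m k j); omega),
      fun m' => mpos_inj (by have := (hb2zy m k j); omega) (by omega)
        (by have := (hb2zy m k j); omega),
      fun k' => mpos_inj (by have := (hb2zy m k j); omega)
        (by have := (hk1y m k').2; omega)
        (by have := (hb2zy m k j); have := (hk1y m k').2; omega)⟩)

/-- There is a 2-tree on 499 vertices admitting no one-sided non-crossing 2-page book
embedding; hence not every 2-tree is POSH. -/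
theorem exists_non_posh_twoTree :
    ∃ G : SimpleGraph (Fin 499), IsTwoTree 499 G ∧
      ¬ ∃ (σ : Equiv.Perm (Fin 499)) (page : Fin 499 → Fin 499 → Bool),
        (∀ a b, page a b = page b a) ∧
        (∀ a b c d : Fin 499, G.Adj (σ a) (σ b) → G.Adj (σ c) (σ d) →
          a < c → c < b → b < d → page a b ≠ page c d) ∧
        (∀ j i i' : Fin 499, G.Adj (σ i) (σ j) → G.Adj (σ i') (σ j) →
          i.val + 1 < j.val → i'.val + 1 < j.val → page i j = page i' j) := by
  refine ⟨Gf 499, isTwoTree_Gf 499 (by omega) (by omega), ?_⟩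
  rintro ⟨σ, page, hsym, hC, hO⟩
  have h01 : mpos σ 0 ≠ mpos σ 1 := mpos_inj (by omega) (by omega) (by omega)
  rcases lt_or_gt_of_ne h01 with h | h
  · exact final_contradiction σ page hC hO 0 1 (by omega) (by omega) (by omega) h
  · exact final_contradiction σ page hC hO 1 0 (by omega) (by omega) (by omega) h
end

section
/- Let (yᵢ) be an exploding sequence (y₁ = y₂ = 0, y_{i+1} > 2yᵢ + y_{i−1} for i ≥ 2, y₃ > 0). Define pᵢ = (i, yᵢ) and qᵢ = (i, −yᵢ). Then for any indices i < j, every point p_k with k < i and every point q_l with l ≤ i lies strictly to the right of the directed line from pᵢ to q_j, and every point q_l with l > j lies strictly to the right as well. -/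
/-- The point `r` lies strictly to the right of the directed line from `a` to `b`. -/
def StrictlyRightOf (a b r : ℝ × ℝ) : Prop :=
  (b.1 - a.1) * (r.2 - a.2) - (b.2 - a.2) * (r.1 - a.1) < 0

/-- Sidedness of the exploding double chain (case i < j): with pᵢ = (i, yᵢ) and
qᵢ = (i, −yᵢ), for i < j every p_k with k < i, every q_l with l ≤ i (other than the point
pᵢ itself), and every q_l with l > j lies strictly to the right of the directed line from
pᵢ to q_j. -/
theorem exploding_double_chain_sidedness (y : ℕ → ℝ)
    (h1 : y 1 = 0) (h2 : y 2 = 0)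
    (hexp : ∀ i : ℕ, 2 ≤ i → y (i + 1) > 2 * y i + y (i - 1))
    (h3 : 0 < y 3) :
    ∀ i j : ℕ, 1 ≤ i → i < j →
      (∀ k : ℕ, 1 ≤ k → k < i →
        StrictlyRightOf ((i : ℝ), y i) ((j : ℝ), -y j) ((k : ℝ), y k)) ∧
      (∀ l : ℕ, 1 ≤ l → l ≤ i → ((l : ℝ), -y l) ≠ ((i : ℝ), y i) →
        StrictlyRightOf ((i : ℝ), y i) ((j : ℝ), -y j) ((l : ℝ), -y l)) ∧
      (∀ l : ℕ, j < l →
        StrictlyRightOf ((i : ℝ), y i) ((j : ℝ), -y j) ((l : ℝ), -y l)) := by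
  -- basic facts: nonnegativity and one-step monotonicity
  have base : ∀ n : ℕ, 1 ≤ n → 0 ≤ y n ∧ y n ≤ y (n + 1) := by
    intro n hn
    induction n, hn using Nat.le_induction with
    | base => exact ⟨by simp [h1], by simp [h1, h2]⟩
    | succ n hn ih =>
      obtain ⟨h0, hs⟩ := ih
      have h0' : 0 ≤ y (n + 1) := le_trans h0 hs
      refine ⟨h0', ?_⟩
      have hE := hexp (n + 1) (by omega)
      simp only [Nat.add_sub_cancel] at hE
      linarith
  have ynn : ∀ n : ℕ, 1 ≤ n → 0 ≤ y n := fun n hn => (base n hn).1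
  have mono : ∀ m n : ℕ, 1 ≤ m → m ≤ n → y m ≤ y n := by
    intro m n hm hmn
    induction n, hmn using Nat.le_induction with
    | base => exact le_refl _
    | succ n hn ih => exact le_trans ih (base n (le_trans hm hn)).2
  -- y j > 0 for j ≥ 3
  have ypos : ∀ n : ℕ, 3 ≤ n → 0 < y n := by
    intro n hn
    exact lt_of_lt_of_le h3 (mono 3 n (by omega) hn)
  -- key inequality for case 3
  have key3 : ∀ i j l : ℕ, 1 ≤ i → i < j → j < l →
      ((l : ℝ) - j) * (y j + y i) < ((j : ℝ) - i) * (y l - y j) := by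
    intro i j l hi hij hjl
    have hji : (1 : ℝ) ≤ (j : ℝ) - i := by
      have : (i : ℝ) + 1 ≤ j := by exact_mod_cast hij
      linarith
    have hs0 : 0 ≤ y j + y i :=
      add_nonneg (ynn j (by omega)) (ynn i hi)
    -- for any l ≥ j (with j ≥ 2), one step gain exceeds y j + y i
    have step : ∀ l : ℕ, j ≤ l → y j + y i < y (l + 1) - y l := by
      intro l hl
      have hE := hexp l (by omega)
      have hm1 : y j ≤ y l := mono j l (by omega) hl
      have hm2 : y i ≤ y (l - 1) := mono i (l - 1) hi (by omega)
      linarith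
    induction l, hjl using Nat.le_induction with
    | base =>
      have hd := step j le_rfl
      push_cast
      nlinarith
    | succ l hl ih =>
      have hd := step l (by omega)
      have ih' := ih
      push_cast at ih' ⊢
      nlinarith
  intro i j hi hij
  have hji : (1 : ℝ) ≤ (j : ℝ) - i := by
    have : (i : ℝ) + 1 ≤ j := by exact_mod_cast hij
    linarith
  have hyi : 0 ≤ y i := ynn i hi
  have hyj : 0 ≤ y j := ynn j (by omega)
  refine ⟨?_, ?_, ?_⟩
  · intro k hk hki
    have hj3 : 0 < y j := ypos j (by omega)
    have hki' : (k : ℝ) + 1 ≤ i := by exact_mod_cast hki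
    have hm : y k ≤ y i := mono k i hk (le_of_lt hki)
    simp only [StrictlyRightOf]
    nlinarith [mul_nonneg (by linarith : (0:ℝ) ≤ (j : ℝ) - i) (by linarith : 0 ≤ y i - y k),
      mul_pos (by linarith : (0:ℝ) < y j + y i) (by linarith : (0:ℝ) < (i : ℝ) - k)]
  · intro l hl hli hne
    simp only [StrictlyRightOf]
    rcases lt_or_eq_of_le hli with hlt | heq
    · have hj3 : 0 < y j := ypos j (by omega)
      have hli' : (l : ℝ) + 1 ≤ i := by exact_mod_cast hlt
      have hyl : 0 ≤ y l := ynn l hl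
      nlinarith [mul_nonneg (by linarith : (0:ℝ) ≤ (j : ℝ) - i) (by linarith : 0 ≤ y l + y i),
        mul_pos (by linarith : (0:ℝ) < y j + y i) (by linarith : (0:ℝ) < (i : ℝ) - l)]
    · subst heq
      have hne' : -y l ≠ y l := by
        intro h
        exact hne (by rw [h])
      have : 0 < y l := lt_of_le_of_ne hyi (fun h => hne' (by rw [← h]; ring))
      nlinarith
  · intro l hjl
    have hk := key3 i j l hi hij hjl
    simp only [StrictlyRightOf]
    nlinarith [hk]
end
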